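/- arXiv:2403.12531 — 7 statements merged into one kernel-verified Lean document; each statement's English description precedes it below -/
import Mathlib

section
/- KL divergence to a mixture, upper bound via pairwise divergences: Let (Ω, μ) be a σ-finite measure space, let p₁, …, p_M be probability densities with respect to μ, and let π₁, …, π_M > 0 with Σ_{j=1}^M π_j = 1. Set p = Σ_{j=1}^M π_j p_j. Fix k and assume that for every j the divergence D(p_k‖p_j) = ∫ p_k ln(p_k/p_j) dμ is well-defined and finite. Then D(p_k‖p) ≤ −ln( Σ_{j=1}^M π_j e^{−D(p_k‖p_j)} ). -/
open MeasureTheory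

/-- **KL divergence to a mixture: upper bound via pairwise divergences.**
For probability densities `p j` w.r.t. a σ-finite measure `μ`, positive priors `π`
summing to 1, mixture `mix = Σ_j π j • p j`, and `k` fixed such that every pairwise
divergence `D (p k ‖ p j) = ∫ p k ln (p k / p j) dμ` is well-defined and finite, one has
`D (p k ‖ mix) ≤ - ln (Σ_j π j exp (- D (p k ‖ p j)))`. -/
theorem klDiv_mixture_le
    {Ω : Type*} [MeasurableSpace Ω] (μ : Measure Ω) [SigmaFinite μ]
    (M : ℕ) (p : Fin M → Ω → ℝ) (π : Fin M → ℝ)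
    (hp_meas : ∀ j, Measurable (p j))
    (hp_nonneg : ∀ j, ∀ x, 0 ≤ p j x)
    (hp_prob : ∀ j, ∫ x, p j x ∂μ = 1)
    (hπ_pos : ∀ j, 0 < π j) (hπ_sum : ∑ j, π j = 1)
    (k : Fin M)
    -- each `D (p k ‖ p j)` is well-defined: `p k` vanishes a.e. where `p j` does,
    -- and the defining integrand is (absolutely) integrable
    (hac : ∀ j, ∀ᵐ x ∂μ, p j x = 0 → p k x = 0)
    (hint : ∀ j, Integrable (fun x => p k x * Real.log (p k x / p j x)) μ) :
    ∫ x, p k x * Real.log (p k x / (∑ j, π j * p j x)) ∂μ ≤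
      -Real.log (∑ j, π j * Real.exp (-∫ x, p k x * Real.log (p k x / p j x) ∂μ)) := by
  classical
  set mix : Ω → ℝ := fun x => ∑ j, π j * p j x with hmix
  set D : Fin M → ℝ := fun j => ∫ x, p k x * Real.log (p k x / p j x) ∂μ with hDdef
  set c : ℝ := ∑ j, π j * Real.exp (-D j) with hcdef
  have hc_pos : 0 < c :=
    Finset.sum_pos (fun j _ => mul_pos (hπ_pos j) (Real.exp_pos _)) ⟨k, Finset.mem_univ k⟩
  set lam : Fin M → ℝ := fun j => π j * Real.exp (-D j) / c with hlamdef
  have hlam_pos : ∀ j, 0 < lam j := fun j =>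
    div_pos (mul_pos (hπ_pos j) (Real.exp_pos _)) hc_pos
  have hlam_sum : ∑ j, lam j = 1 := by
    simp only [hlamdef, ← Finset.sum_div]
    exact div_self hc_pos.ne'
  set K : ℝ := ∑ j, lam j * Real.log (π j / lam j) with hKdef
  have hlog_ratio : ∀ j, Real.log (π j / lam j) = Real.log c + D j := by
    intro j
    have h1 : π j / lam j = c * Real.exp (D j) := by
      have ha := (hπ_pos j).ne'
      have hb := Real.exp_ne_zero (-D j)
      simp only [hlamdef]
      field_simp
      have hex : Real.exp (D j) * Real.exp (-D j) = 1 := by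
        rw [← Real.exp_add]; simp
      linear_combination -hex
    rw [h1, Real.log_mul hc_pos.ne' (Real.exp_ne_zero _), Real.log_exp]
  have hK_eq : K = Real.log c + ∑ j, lam j * D j := by
    simp only [hKdef]
    calc ∑ j, lam j * Real.log (π j / lam j)
        = ∑ j, (lam j * Real.log c + lam j * D j) := by
          refine Finset.sum_congr rfl fun j _ => ?_
          rw [hlog_ratio j, mul_add]
      _ = (∑ j, lam j) * Real.log c + ∑ j, lam j * D j := by
          rw [Finset.sum_add_distrib, Finset.sum_mul]
      _ = Real.log c + ∑ j, lam j * D j := by rw [hlam_sum, one_mul]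
  -- basic integrability facts
  have hpj_int : ∀ j, Integrable (p j) μ := by
    intro j
    by_contra h
    have := hp_prob j
    rw [integral_undef h] at this
    norm_num at this
  have hpk_int : Integrable (p k) μ := hpj_int k
  have hmix_int : Integrable mix μ := by
    simp only [hmix]
    exact integrable_finset_sum _ fun j _ => (hpj_int j).const_mul (π j)
  have hmix_meas : Measurable mix := by
    simp only [hmix]
    exact Finset.measurable_sum _ fun j _ => (hp_meas j).const_mul (π j)
  have hmix_nonneg : ∀ x, 0 ≤ mix x := fun x =>
    Finset.sum_nonneg fun j _ => mul_nonneg (hπ_pos j).le (hp_nonneg j x)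
  have hmix_pos : ∀ x, 0 < p k x → 0 < mix x := by
    intro x hpos
    exact lt_of_lt_of_le (mul_pos (hπ_pos k) hpos)
      (Finset.single_le_sum (f := fun j => π j * p j x)
        (fun j _ => mul_nonneg (hπ_pos j).le (hp_nonneg j x)) (Finset.mem_univ k))
  set f : Ω → ℝ := fun x => p k x * Real.log (p k x / mix x) with hfdef
  set g : Ω → ℝ :=
    fun x => (∑ j, lam j * (p k x * Real.log (p k x / p j x))) - K * p k x with hgdef
  have hg_int : Integrable g μ :=
    (integrable_finset_sum _ fun j _ => (hint j).const_mul (lam j)).sub (hpk_int.const_mul K)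
  have hg_integral : ∫ x, g x ∂μ = (∑ j, lam j * D j) - K := by
    simp only [hgdef]
    rw [integral_sub (integrable_finset_sum _ fun j _ => (hint j).const_mul (lam j))
      (hpk_int.const_mul K)]
    rw [integral_finset_sum _ fun j _ => (hint j).const_mul (lam j)]
    simp only [integral_const_mul]
    rw [hp_prob k, mul_one]
  -- pointwise lower bound (everywhere)
  have hlower : ∀ x, p k x - mix x ≤ f x := by
    intro x
    rcases eq_or_lt_of_le (hp_nonneg k x) with h0 | hpos
    · simp only [hfdef, ← h0, zero_mul, zero_sub, neg_nonpos]
      exact hmix_nonneg x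
    · have hmp := hmix_pos x hpos
      have h1 : Real.log (mix x / p k x) ≤ mix x / p k x - 1 :=
        Real.log_le_sub_one_of_pos (div_pos hmp hpos)
      have h2 : Real.log (p k x / mix x) = -Real.log (mix x / p k x) := by
        rw [← Real.log_inv, inv_div]
      have h3 : p k x * (mix x / p k x) = mix x := by field_simp
      have h4 := mul_le_mul_of_nonneg_left h1 hpos.le
      simp only [hfdef, h2]
      nlinarith [h4, h3]
  -- pointwise upper bound (a.e.)
  have hE : ∀ᵐ x ∂μ, ∀ j, p j x = 0 → p k x = 0 := (ae_all_iff).2 hac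
  have hupper : ∀ᵐ x ∂μ, f x ≤ g x := by
    filter_upwards [hE] with x hx
    rcases eq_or_lt_of_le (hp_nonneg k x) with h0 | hpos
    · simp [hfdef, hgdef, ← h0]
    · have hpj : ∀ j, 0 < p j x := by
        intro j
        rcases eq_or_lt_of_le (hp_nonneg j x) with hj0 | hjpos
        · exact absurd (hx j hj0.symm) hpos.ne'
        · exact hjpos
      have hmp := hmix_pos x hpos
      -- Jensen (concavity of log)
      have jensen := (strictConcaveOn_log_Ioi.concaveOn).le_map_sum
        (t := Finset.univ) (w := lam) (p := fun j => π j * p j x / (lam j * p k x))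
        (fun j _ => (hlam_pos j).le) hlam_sum
        (fun j _ => Set.mem_Ioi.2
          (div_pos (mul_pos (hπ_pos j) (hpj j)) (mul_pos (hlam_pos j) hpos)))
      have hsum_b : ∑ j, lam j • (π j * p j x / (lam j * p k x)) = mix x / p k x := by
        have hterm : ∀ j, lam j • (π j * p j x / (lam j * p k x)) = π j * p j x / p k x := by
          intro j
          have h1 := (hlam_pos j).ne'
          have h2 := hpos.ne'
          rw [smul_eq_mul]
          field_simp
        rw [Finset.sum_congr rfl fun j _ => hterm j, ← Finset.sum_div]
      have hlog_b : ∀ j, Real.log (π j * p j x / (lam j * p k x))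
          = Real.log (π j / lam j) - Real.log (p k x / p j x) := by
        intro j
        have h5 : π j * p j x / (lam j * p k x) = (π j / lam j) * (p j x / p k x) := by
          field_simp
        rw [h5, Real.log_mul (div_pos (hπ_pos j) (hlam_pos j)).ne'
          (div_pos (hpj j) hpos).ne']
        congr 1
        rw [← Real.log_inv, inv_div]
      have hsum_logb : ∑ j, lam j • Real.log (π j * p j x / (lam j * p k x))
          = K - ∑ j, lam j * Real.log (p k x / p j x) := by
        simp only [smul_eq_mul]
        calc ∑ j, lam j * Real.log (π j * p j x / (lam j * p k x))
            = ∑ j, (lam j * Real.log (π j / lam j)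
                - lam j * Real.log (p k x / p j x)) := by
              refine Finset.sum_congr rfl fun j _ => ?_
              rw [hlog_b j, mul_sub]
          _ = K - ∑ j, lam j * Real.log (p k x / p j x) := by
              rw [Finset.sum_sub_distrib, hKdef]
      rw [hsum_b, hsum_logb] at jensen
      have key : Real.log (p k x / mix x)
          ≤ (∑ j, lam j * Real.log (p k x / p j x)) - K := by
        have h6 : Real.log (p k x / mix x) = -Real.log (mix x / p k x) := by
          rw [← Real.log_inv, inv_div]
        rw [h6]
        linarith [jensen]
      have h7 := mul_le_mul_of_nonneg_left key hpos.le
      simp only [hfdef, hgdef]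
      calc p k x * Real.log (p k x / mix x)
          ≤ p k x * ((∑ j, lam j * Real.log (p k x / p j x)) - K) := h7
        _ = (∑ j, lam j * (p k x * Real.log (p k x / p j x))) - K * p k x := by
            rw [mul_sub, Finset.mul_sum]
            congr 1
            · exact Finset.sum_congr rfl fun j _ => by ring
            · ring
  -- integrability of f
  have hf_meas : AEStronglyMeasurable f μ := by
    apply Measurable.aestronglyMeasurable
    exact (hp_meas k).mul (Real.measurable_log.comp ((hp_meas k).div hmix_meas))
  have hf_int : Integrable f μ := by
    refine Integrable.mono' (g := fun x => |g x| + |p k x - mix x|)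
      (hg_int.abs.add (hpk_int.sub hmix_int).abs) hf_meas ?_
    filter_upwards [hupper] with x hx
    rw [Real.norm_eq_abs, abs_le]
    constructor
    · have h1 := hlower x
      have h2 := neg_abs_le (p k x - mix x)
      have h3 := abs_nonneg (g x)
      linarith
    · have h1 := le_abs_self (g x)
      have h2 := abs_nonneg (p k x - mix x)
      linarith
  -- conclude
  have hfinal : ∫ x, f x ∂μ ≤ -Real.log c := by
    calc ∫ x, f x ∂μ ≤ ∫ x, g x ∂μ := integral_mono_ae hf_int hg_int hupper
      _ = (∑ j, lam j * D j) - K := hg_integral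
      _ = -Real.log c := by rw [hK_eq]; ring
  exact hfinal
end

section
/- Mutual information upper bound via pairwise KL affinities: Let (Ω, μ) be a σ-finite measure space, let p₁, …, p_M be probability densities with respect to μ, and let π₁, …, π_M > 0 with Σ_{k=1}^M π_k = 1. Set p = Σ_{j=1}^M π_j p_j and for each pair (k,j) assume D(p_k‖p_j) = ∫ p_k ln(p_k/p_j) dμ is well-defined and finite. Then Σ_{k=1}^M π_k D(p_k‖p) ≤ −Σ_{k=1}^M π_k ln( Σ_{j=1}^M π_j e^{−D(p_k‖p_j)} ). -/
/-!
For a fixed class `k` and any probability vector `w`, Jensen's inequality for `log` gives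
pointwise `log (∑ j, π j p j / p k) ≥ ∑ j, w j log (π j p j / (w j p k))`; integrating against
`p k` yields `D(p k ‖ p) ≤ ∑ j, w j (D(p k ‖ p j) - log (π j / w j))`. The tilted weights
`w j ∝ π j exp (-D(p k ‖ p j))` turn the right-hand side into
`-log (∑ j, π j exp (-D(p k ‖ p j)))`, and averaging over `k` with the priors gives the theorem.
`p k log (p k / p)` is integrable because it lies between `p k - p` and the integrable
pointwise bound.
-/

open MeasureTheory Finset

section Pointwise

variable {ι : Type*}

lemma sub_le_mul_log_div {a b : ℝ} (ha : 0 ≤ a) (hb : 0 ≤ b) (hab : b = 0 → a = 0) :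
    a - b ≤ a * Real.log (a / b) := by
  rcases ha.eq_or_lt with rfl | ha
  · simpa using hb
  have hb : 0 < b := hb.lt_of_ne' fun h => ha.ne' (hab h)
  have h := mul_le_mul_of_nonneg_left (Real.one_sub_inv_le_log_of_pos (div_pos ha hb)) ha.le
  rwa [inv_div, mul_sub, mul_one, mul_div_cancel₀ _ ha.ne'] at h

lemma sum_mul_log_div_le_log_sum (s : Finset ι) {w x : ι → ℝ} (hw : ∀ i ∈ s, 0 < w i)
    (hw1 : ∑ i ∈ s, w i = 1) (hx : ∀ i ∈ s, 0 < x i) :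
    ∑ i ∈ s, w i * Real.log (x i / w i) ≤ Real.log (∑ i ∈ s, x i) := by
  have h := strictConcaveOn_log_Ioi.concaveOn.le_map_sum (fun i hi => (hw i hi).le) hw1
    (fun i hi => Set.mem_Ioi.2 (div_pos (hx i hi) (hw i hi)))
  simp only [smul_eq_mul] at h
  rwa [sum_congr rfl fun i hi => mul_div_cancel₀ (x i) (hw i hi).ne'] at h

variable [Fintype ι]

lemma mul_log_div_sum_le {a : ℝ} {π q w : ι → ℝ} (ha : 0 ≤ a) (hq : 0 < a → ∀ j, 0 < q j)
    (hπ : ∀ j, 0 < π j) (hw : ∀ j, 0 < w j) (hw1 : ∑ j, w j = 1) :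
    a * Real.log (a / ∑ j, π j * q j) ≤
      ∑ j, w j * (a * Real.log (a / q j) - Real.log (π j / w j) * a) := by
  rcases ha.eq_or_lt with rfl | ha
  · simp
  have hq := hq ha
  have hgibbs := sum_mul_log_div_le_log_sum univ (fun j _ => hw j) hw1
    (x := fun j => π j * q j / a) fun j _ => div_pos (mul_pos (hπ j) (hq j)) ha
  have hlog_term (j : ι) :
      Real.log (π j * q j / a / w j) = Real.log (π j / w j) - Real.log (a / q j) := by
    rw [← Real.log_div (div_pos (hπ j) (hw j)).ne' (div_pos ha (hq j)).ne']
    congr 1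
    field_simp
  rw [← sum_div, ← inv_div, Real.log_inv] at hgibbs
  simp only [hlog_term] at hgibbs
  calc a * Real.log (a / ∑ j, π j * q j)
      ≤ a * -∑ j, w j * (Real.log (π j / w j) - Real.log (a / q j)) :=
        mul_le_mul_of_nonneg_left (by linarith) ha.le
    _ = _ := by
        rw [mul_neg, mul_sum, ← sum_neg_distrib]
        exact sum_congr rfl fun j _ => by ring

end Pointwise

section TiltedWeights

variable {ι : Type*} [Fintype ι]

noncomputable def tiltedWeights (π c : ι → ℝ) (j : ι) : ℝ :=
  π j * Real.exp (-c j) / ∑ i, π i * Real.exp (-c i)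

lemma sum_mul_exp_neg_pos [Nonempty ι] {π : ι → ℝ} (hπ : ∀ j, 0 < π j) (c : ι → ℝ) :
    0 < ∑ i, π i * Real.exp (-c i) :=
  sum_pos (fun i _ => mul_pos (hπ i) (Real.exp_pos _)) univ_nonempty

lemma tiltedWeights_pos [Nonempty ι] {π : ι → ℝ} (hπ : ∀ j, 0 < π j) (c : ι → ℝ) (j : ι) :
    0 < tiltedWeights π c j :=
  div_pos (mul_pos (hπ j) (Real.exp_pos _)) (sum_mul_exp_neg_pos hπ c)

lemma sum_tiltedWeights [Nonempty ι] {π : ι → ℝ} (hπ : ∀ j, 0 < π j) (c : ι → ℝ) :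
    ∑ j, tiltedWeights π c j = 1 := by
  simp only [tiltedWeights]
  rw [← sum_div, div_self (sum_mul_exp_neg_pos hπ c).ne']

lemma sum_tiltedWeights_mul_sub_log [Nonempty ι] {π : ι → ℝ} (hπ : ∀ j, 0 < π j) (c : ι → ℝ) :
    ∑ j, tiltedWeights π c j * (c j - Real.log (π j / tiltedWeights π c j)) =
      -Real.log (∑ i, π i * Real.exp (-c i)) := by
  have hS := sum_mul_exp_neg_pos hπ c
  have hlog (j : ι) : Real.log (π j / tiltedWeights π c j) =
      Real.log (∑ i, π i * Real.exp (-c i)) + c j := by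
    rw [tiltedWeights, div_div_eq_mul_div, mul_div_mul_left _ _ (hπ j).ne', div_eq_mul_inv,
      ← Real.exp_neg, neg_neg, Real.log_mul hS.ne' (Real.exp_pos _).ne', Real.log_exp]
  simp only [hlog, sub_add_cancel_right]
  rw [← sum_mul, sum_tiltedWeights hπ c, one_mul]

end TiltedWeights

section Integral

variable {Ω ι : Type*} [MeasurableSpace Ω] {μ : Measure Ω} [Fintype ι]

theorem integral_mul_log_div_mixture_le {p : Ω → ℝ} {q : ι → Ω → ℝ} {π w : ι → ℝ}
    (hp_meas : Measurable p) (hq_meas : ∀ j, Measurable (q j))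
    (hp_nonneg : ∀ x, 0 ≤ p x) (hq_nonneg : ∀ j x, 0 ≤ q j x)
    (hp_prob : ∫ x, p x ∂μ = 1) (hq_int : ∀ j, Integrable (q j) μ)
    (hπ : ∀ j, 0 < π j) (hw : ∀ j, 0 < w j) (hw1 : ∑ j, w j = 1)
    (hac : ∀ j, ∀ᵐ x ∂μ, q j x = 0 → p x = 0)
    (hint : ∀ j, Integrable (fun x => p x * Real.log (p x / q j x)) μ) :
    ∫ x, p x * Real.log (p x / ∑ j, π j * q j x) ∂μ ≤
      ∑ j, w j * (∫ x, p x * Real.log (p x / q j x) ∂μ - Real.log (π j / w j)) := by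
  have hp_int : Integrable p μ := integrable_of_integral_eq_one hp_prob
  have hq_pos : ∀ᵐ x ∂μ, 0 < p x → ∀ j, 0 < q j x := by
    filter_upwards [ae_all_iff.2 hac] with x hx hpx j
    exact (hq_nonneg j x).lt_of_ne' fun h => hpx.ne' (hx j h)
  have hι : (univ : Finset ι).Nonempty := nonempty_of_sum_ne_zero (hw1 ▸ one_ne_zero)
  set mix : Ω → ℝ := fun x => ∑ j, π j * q j x
  set bound : Ω → ℝ := fun x =>
    ∑ j, w j * (p x * Real.log (p x / q j x) - Real.log (π j / w j) * p x)
  have hmix_int : Integrable mix μ := integrable_finsetSum _ fun j _ => (hq_int j).const_mul _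
  have hterm_int (j : ι) : Integrable
      (fun x => w j * (p x * Real.log (p x / q j x) - Real.log (π j / w j) * p x)) μ :=
    ((hint j).sub (hp_int.const_mul _)).const_mul _
  have hbound_int : Integrable bound μ := integrable_finsetSum _ fun j _ => hterm_int j
  have hle_bound : ∀ᵐ x ∂μ, p x * Real.log (p x / mix x) ≤ bound x := by
    filter_upwards [hq_pos] with x hx
    exact mul_log_div_sum_le (hp_nonneg x) hx hπ hw hw1
  have hge : ∀ᵐ x ∂μ, p x - mix x ≤ p x * Real.log (p x / mix x) := by
    filter_upwards [hq_pos] with x hx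
    refine sub_le_mul_log_div (hp_nonneg x)
      (sum_nonneg fun j _ => mul_nonneg (hπ j).le (hq_nonneg j x)) fun hmix => ?_
    by_contra hpx
    exact (sum_pos (fun j _ => mul_pos (hπ j) (hx ((hp_nonneg x).lt_of_ne' hpx) j)) hι).ne' hmix
  have hf_int : Integrable (fun x => p x * Real.log (p x / mix x)) μ := by
    refine integrable_of_le_of_le ?_ hge hle_bound (hp_int.sub hmix_int) hbound_int
    exact (hp_meas.mul (Real.measurable_log.comp (hp_meas.div
      (Finset.measurable_sum _ fun j _ => (hq_meas j).const_mul _)))).aestronglyMeasurable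
  calc ∫ x, p x * Real.log (p x / mix x) ∂μ ≤ ∫ x, bound x ∂μ :=
        integral_mono_ae hf_int hbound_int hle_bound
    _ = _ := by
        rw [integral_finsetSum _ fun j _ => hterm_int j]
        refine sum_congr rfl fun j _ => ?_
        rw [integral_const_mul, integral_sub (hint j) (hp_int.const_mul _), integral_const_mul,
          hp_prob, mul_one]

end Integral

theorem mutual_information_upper_bound_via_KL_affinities_general
    {Ω : Type*} [MeasurableSpace Ω] (μ : Measure Ω)
    (M : ℕ) (p : Fin M → Ω → ℝ) (π : Fin M → ℝ)
    (hp_meas : ∀ k, Measurable (p k))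
    (hp_nonneg : ∀ k, ∀ x, 0 ≤ p k x)
    (hp_prob : ∀ k, ∫ x, p k x ∂μ = 1)
    (hπ_pos : ∀ k, 0 < π k)
    -- each `D (p k ‖ p j)` is well-defined: `p k` vanishes a.e. where `p j` does,
    -- and the defining integrand is (absolutely) integrable
    (hac : ∀ k j, ∀ᵐ x ∂μ, p j x = 0 → p k x = 0)
    (hint : ∀ k j, Integrable (fun x => p k x * Real.log (p k x / p j x)) μ) :
    ∑ k, π k * ∫ x, p k x * Real.log (p k x / (∑ j, π j * p j x)) ∂μ ≤
      -∑ k, π k *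
        Real.log (∑ j, π j * Real.exp (-∫ x, p k x * Real.log (p k x / p j x) ∂μ)) := by
  set D : Fin M → Fin M → ℝ := fun k j => ∫ x, p k x * Real.log (p k x / p j x) ∂μ
  have hclass (k : Fin M) : ∫ x, p k x * Real.log (p k x / ∑ j, π j * p j x) ∂μ ≤
      -Real.log (∑ j, π j * Real.exp (-D k j)) := by
    have : Nonempty (Fin M) := ⟨k⟩
    rw [← sum_tiltedWeights_mul_sub_log hπ_pos (D k)]
    exact integral_mul_log_div_mixture_le (hp_meas k) hp_meas (hp_nonneg k) hp_nonneg (hp_prob k)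
      (fun j => integrable_of_integral_eq_one (hp_prob j)) hπ_pos (tiltedWeights_pos hπ_pos _)
      (sum_tiltedWeights hπ_pos _) (hac k) (hint k)
  rw [← sum_neg_distrib]
  exact sum_le_sum fun k _ => by
    rw [← mul_neg]
    exact mul_le_mul_of_nonneg_left (hclass k) (hπ_pos k).le

/-- **Mutual information upper bound via pairwise KL affinities.**
For probability densities `p k` w.r.t. a σ-finite measure `μ`, positive priors `π`
summing to 1, mixture `mix = Σ_j π j • p j`, assuming every pairwise divergence
`D (p k ‖ p j) = ∫ p k ln (p k / p j) dμ` is well-defined and finite, one has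
`Σ_k π k D (p k ‖ mix) ≤ - Σ_k π k ln (Σ_j π j exp (- D (p k ‖ p j)))`. -/
theorem mutual_information_upper_bound_via_KL_affinities
    {Ω : Type*} [MeasurableSpace Ω] (μ : Measure Ω) [SigmaFinite μ]
    (M : ℕ) (p : Fin M → Ω → ℝ) (π : Fin M → ℝ)
    (hp_meas : ∀ k, Measurable (p k))
    (hp_nonneg : ∀ k, ∀ x, 0 ≤ p k x)
    (hp_prob : ∀ k, ∫ x, p k x ∂μ = 1)
    (hπ_pos : ∀ k, 0 < π k) (hπ_sum : ∑ k, π k = 1)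
    -- each `D (p k ‖ p j)` is well-defined: `p k` vanishes a.e. where `p j` does,
    -- and the defining integrand is (absolutely) integrable
    (hac : ∀ k j, ∀ᵐ x ∂μ, p j x = 0 → p k x = 0)
    (hint : ∀ k j, Integrable (fun x => p k x * Real.log (p k x / p j x)) μ) :
    ∑ k, π k * ∫ x, p k x * Real.log (p k x / (∑ j, π j * p j x)) ∂μ ≤
      -∑ k, π k *
        Real.log (∑ j, π j * Real.exp (-∫ x, p k x * Real.log (p k x / p j x) ∂μ)) :=
  mutual_information_upper_bound_via_KL_affinities_general μ M p π hp_meas hp_nonneg hp_prob hπ_pos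
    hac hint
end

section
/- Mutual information lower bound via pairwise Bhattacharyya affinities: Let (Ω, μ) be a σ-finite measure space, let p₁, …, p_M be probability densities with respect to μ, and let π₁, …, π_M > 0 with Σ_{k=1}^M π_k = 1. Set p = Σ_{j=1}^M π_j p_j and R_{kj} = ∫ √(p_k p_j) dμ. Then, with D(p_k‖p) = ∫ p_k ln(p_k/p) dμ (valued in [0,∞]), one has Σ_{k=1}^M π_k D(p_k‖p) ≥ −Σ_{k=1}^M π_k ln( Σ_{j=1}^M π_j R_{kj} ). -/
open MeasureTheory

set_option maxHeartbeats 1000000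

/-- Tangent-line inequality for `t ↦ t log t`: for `t ≥ 0`, `c > 0`,
`t - c ≤ t * log (t / c)`. -/
private lemma log_tangent {t c : ℝ} (ht : 0 ≤ t) (hc : 0 < c) :
    t - c ≤ t * Real.log (t / c) := by
  rcases eq_or_lt_of_le ht with h | h
  · rw [← h]
    simp
    linarith
  · have h1 : 0 < c / t := div_pos hc h
    have h2 := Real.log_le_sub_one_of_pos h1
    have h3 : Real.log (c / t) = - Real.log (t / c) := by
      rw [← Real.log_inv]
      congr 1
      rw [inv_div]
    have h4 : 1 - c / t ≤ Real.log (t / c) := by rw [h3] at h2; linarith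
    have h5 : t * (1 - c / t) ≤ t * Real.log (t / c) :=
      mul_le_mul_of_nonneg_left h4 h.le
    have h6 : t * (1 - c / t) = t - c := by field_simp
    linarith

/-- The pointwise convexity inequality at the heart of the bound. -/
private lemma aux_pointwise {M : ℕ} (π a : Fin M → ℝ) (hπ : ∀ k, 0 < π k)
    (ha : ∀ k, 0 ≤ a k) :
    0 ≤ ∑ k, π k * (a k * Real.log (a k / ∑ j, π j * a j) +
      a k * Real.log ((∑ j, π j * Real.sqrt (a j)) / Real.sqrt (a k))) := by
  have hm0 : 0 ≤ ∑ j, π j * a j :=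
    Finset.sum_nonneg fun j _ => mul_nonneg (hπ j).le (ha j)
  rcases eq_or_lt_of_le hm0 with h | h
  · have hall : ∀ j, a j = 0 := by
      intro j
      by_contra hne
      have hj : 0 < a j := (ha j).lt_of_ne (Ne.symm hne)
      have h1 : π j * a j ≤ ∑ i, π i * a i :=
        Finset.single_le_sum (f := fun i => π i * a i)
          (fun i _ => mul_nonneg (hπ i).le (ha i)) (Finset.mem_univ j)
      nlinarith [mul_pos (hπ j) hj]
    apply le_of_eq
    symm
    apply Finset.sum_eq_zero
    intro k _
    simp [hall k]
  · -- the mixture is positive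
    have hex : ∃ j, 0 < a j := by
      by_contra hno
      push_neg at hno
      have hz : ∑ j, π j * a j = 0 := by
        apply Finset.sum_eq_zero
        intro j _
        have : a j = 0 := le_antisymm (hno j) (ha j)
        simp [this]
      linarith
    obtain ⟨j0, hj0⟩ := hex
    have hs_pos : 0 < ∑ j, π j * Real.sqrt (a j) := by
      have h1 : π j0 * Real.sqrt (a j0) ≤ ∑ i, π i * Real.sqrt (a i) :=
        Finset.single_le_sum (f := fun i => π i * Real.sqrt (a i))
          (fun i _ => mul_nonneg (hπ i).le (Real.sqrt_nonneg _)) (Finset.mem_univ j0)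
      have h2 := mul_pos (hπ j0) (Real.sqrt_pos.mpr hj0)
      linarith
    set m : ℝ := ∑ j, π j * a j with hm
    set s : ℝ := ∑ j, π j * Real.sqrt (a j) with hs
    have hc : 0 < m / s := div_pos h hs_pos
    have hterm : ∀ k, Real.sqrt (a k) * (Real.sqrt (a k) - m / s) ≤
        a k * Real.log (a k / m) + a k * Real.log (s / Real.sqrt (a k)) := by
      intro k
      rcases eq_or_lt_of_le (ha k) with h0 | h0
      · rw [← h0]
        simp
      · have hsp : 0 < Real.sqrt (a k) := Real.sqrt_pos.mpr h0
        have base := log_tangent hsp.le hc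
        have key : a k / m * (s / Real.sqrt (a k)) = Real.sqrt (a k) / (m / s) := by
          calc a k / m * (s / Real.sqrt (a k))
              = a k / Real.sqrt (a k) * (s / m) := by ring
            _ = Real.sqrt (a k) * (s / m) := by rw [Real.div_sqrt]
            _ = Real.sqrt (a k) * s / m := by ring
            _ = Real.sqrt (a k) / (m / s) := by rw [div_div_eq_mul_div]
        have hcomb : a k * Real.log (a k / m) + a k * Real.log (s / Real.sqrt (a k)) =
            a k * Real.log (Real.sqrt (a k) / (m / s)) := by
          rw [← mul_add,
            ← Real.log_mul (ne_of_gt (div_pos h0 h)) (ne_of_gt (div_pos hs_pos hsp)), key]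
        rw [hcomb]
        calc Real.sqrt (a k) * (Real.sqrt (a k) - m / s)
            ≤ Real.sqrt (a k) * (Real.sqrt (a k) * Real.log (Real.sqrt (a k) / (m / s))) :=
              mul_le_mul_of_nonneg_left base hsp.le
          _ = a k * Real.log (Real.sqrt (a k) / (m / s)) := by
              rw [← mul_assoc, Real.mul_self_sqrt h0.le]
    have hsum0 : ∑ k, π k * (Real.sqrt (a k) * (Real.sqrt (a k) - m / s)) = 0 := by
      have he : ∀ k ∈ Finset.univ, π k * (Real.sqrt (a k) * (Real.sqrt (a k) - m / s)) =
          π k * a k - m / s * (π k * Real.sqrt (a k)) := by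
        intro k _
        have h2 := Real.mul_self_sqrt (ha k)
        calc π k * (Real.sqrt (a k) * (Real.sqrt (a k) - m / s))
            = π k * (Real.sqrt (a k) * Real.sqrt (a k)) -
              m / s * (π k * Real.sqrt (a k)) := by ring
          _ = π k * a k - m / s * (π k * Real.sqrt (a k)) := by rw [h2]
      rw [Finset.sum_congr rfl he, Finset.sum_sub_distrib, ← Finset.mul_sum, ← hm, ← hs,
        div_mul_cancel₀ _ hs_pos.ne', sub_self]
    calc (0:ℝ) = ∑ k, π k * (Real.sqrt (a k) * (Real.sqrt (a k) - m / s)) := hsum0.symm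
      _ ≤ ∑ k, π k * (a k * Real.log (a k / m) + a k * Real.log (s / Real.sqrt (a k))) :=
          Finset.sum_le_sum fun k _ => mul_le_mul_of_nonneg_left (hterm k) (hπ k).le

/-- **Mutual information lower bound via pairwise Bhattacharyya affinities.**
For probability densities `p k` w.r.t. a σ-finite measure `μ`, positive priors `π`
summing to 1, mixture `mix = Σ_j π j • p j` and Bhattacharyya affinities
`R k j = ∫ √(p k * p j) dμ`, one has
`Σ_k π k D (p k ‖ mix) ≥ - Σ_k π k ln (Σ_j π j R k j)`,
where `D (p k ‖ mix) = ∫ p k ln (p k / mix) dμ` is valued in `[0,∞]`: since the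
mixture dominates `π k • p k`, the divergence is either `+∞` (when the defining
integrand fails to be integrable, in which case the bound is trivial) or the
Bochner integral of the integrand; this dichotomy is expressed by the disjunction. -/
theorem mutual_information_lower_bound_via_Bhattacharyya
    {Ω : Type*} [MeasurableSpace Ω] (μ : Measure Ω) [SigmaFinite μ]
    (M : ℕ) (p : Fin M → Ω → ℝ) (π : Fin M → ℝ)
    (hp_meas : ∀ k, Measurable (p k))
    (hp_nonneg : ∀ k, ∀ x, 0 ≤ p k x)
    (hp_prob : ∀ k, ∫ x, p k x ∂μ = 1)
    (hπ_pos : ∀ k, 0 < π k) (hπ_sum : ∑ k, π k = 1) :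
    (∃ k, ¬ Integrable (fun x => p k x * Real.log (p k x / (∑ j, π j * p j x))) μ) ∨
      -∑ k, π k * Real.log (∑ j, π j * ∫ x, Real.sqrt (p k x * p j x) ∂μ) ≤
        ∑ k, π k * ∫ x, p k x * Real.log (p k x / (∑ j, π j * p j x)) ∂μ := by
  classical
  by_cases hI : ∀ k, Integrable (fun x => p k x * Real.log (p k x / (∑ j, π j * p j x))) μ
  swap
  · exact Or.inl (not_forall.mp hI)
  right
  -- basic integrability of the densities
  have hp_int : ∀ k, Integrable (p k) μ := by
    intro k
    by_contra h
    have := hp_prob k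
    rw [integral_undef h] at this
    norm_num at this
  -- measurability of the auxiliary functions
  have hs_meas : Measurable (fun x => ∑ j, π j * Real.sqrt (p j x)) :=
    Finset.measurable_sum _ fun j _ => measurable_const.mul (hp_meas j).sqrt
  have hg_meas : ∀ k, Measurable (fun x =>
      p k x * Real.log ((∑ j, π j * Real.sqrt (p j x)) / Real.sqrt (p k x))) :=
    fun k => (hp_meas k).mul (Real.measurable_log.comp (hs_meas.div (hp_meas k).sqrt))
  -- nonnegativity / positivity helpers
  have hmix_nonneg : ∀ x, 0 ≤ ∑ j, π j * p j x :=
    fun x => Finset.sum_nonneg fun j _ => mul_nonneg (hπ_pos j).le (hp_nonneg j x)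
  have hs_nonneg : ∀ x, 0 ≤ ∑ j, π j * Real.sqrt (p j x) :=
    fun x => Finset.sum_nonneg fun j _ => mul_nonneg (hπ_pos j).le (Real.sqrt_nonneg _)
  have hmix_pos : ∀ k x, 0 < p k x → 0 < ∑ j, π j * p j x := by
    intro k x h
    have h1 : π k * p k x ≤ ∑ j, π j * p j x :=
      Finset.single_le_sum (f := fun j => π j * p j x)
        (fun j _ => mul_nonneg (hπ_pos j).le (hp_nonneg j x)) (Finset.mem_univ k)
    nlinarith [mul_pos (hπ_pos k) h]
  have hs_pos : ∀ k x, 0 < p k x → 0 < ∑ j, π j * Real.sqrt (p j x) := by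
    intro k x h
    have h1 : π k * Real.sqrt (p k x) ≤ ∑ j, π j * Real.sqrt (p j x) :=
      Finset.single_le_sum (f := fun j => π j * Real.sqrt (p j x))
        (fun j _ => mul_nonneg (hπ_pos j).le (Real.sqrt_nonneg _)) (Finset.mem_univ k)
    nlinarith [mul_pos (hπ_pos k) (Real.sqrt_pos.mpr h)]
  -- integrability of Bhattacharyya integrands
  have hsq_int : ∀ k j, Integrable (fun x => Real.sqrt (p k x * p j x)) μ := by
    intro k j
    have hb : Integrable (fun x => (p k x + p j x) / 2) μ :=
      ((hp_int k).add (hp_int j)).div_const 2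
    refine hb.mono' ((hp_meas k).mul (hp_meas j)).sqrt.aestronglyMeasurable ?_
    filter_upwards with x
    rw [Real.norm_eq_abs, abs_of_nonneg (Real.sqrt_nonneg _),
      Real.sqrt_mul (hp_nonneg k x)]
    nlinarith [Real.sq_sqrt (hp_nonneg k x), Real.sq_sqrt (hp_nonneg j x),
      sq_nonneg (Real.sqrt (p k x) - Real.sqrt (p j x)), Real.sqrt_nonneg (p k x),
      Real.sqrt_nonneg (p j x)]
  have hfun : ∀ k, (fun x => Real.sqrt (p k x) * ∑ j, π j * Real.sqrt (p j x)) =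
      fun x => ∑ j, π j * Real.sqrt (p k x * p j x) := by
    intro k
    funext x
    rw [Finset.mul_sum]
    refine Finset.sum_congr rfl fun j _ => ?_
    rw [Real.sqrt_mul (hp_nonneg k x)]
    ring
  have hsk_int : ∀ k, Integrable (fun x =>
      Real.sqrt (p k x) * ∑ j, π j * Real.sqrt (p j x)) μ := by
    intro k
    rw [hfun k]
    exact integrable_finset_sum _ fun j _ => (hsq_int k j).const_mul _
  -- value of `∫ √(p k) * s`
  have hS_eq : ∀ k, ∫ x, Real.sqrt (p k x) * (∑ j, π j * Real.sqrt (p j x)) ∂μ =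
      ∑ j, π j * ∫ x, Real.sqrt (p k x * p j x) ∂μ := by
    intro k
    rw [hfun k, integral_finset_sum _ fun j _ => (hsq_int k j).const_mul _]
    exact Finset.sum_congr rfl fun j _ => integral_const_mul _ _
  -- positivity of `S k`
  have hS_pos : ∀ k, 0 < ∑ j, π j * ∫ x, Real.sqrt (p k x * p j x) ∂μ := by
    intro k
    have h1 : ∫ x, Real.sqrt (p k x * p k x) ∂μ = 1 := by
      have h2 : (fun x => Real.sqrt (p k x * p k x)) = fun x => p k x := by
        funext x
        exact Real.sqrt_mul_self (hp_nonneg k x)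
      rw [h2]
      exact hp_prob k
    have h2 : π k * ∫ x, Real.sqrt (p k x * p k x) ∂μ ≤
        ∑ j, π j * ∫ x, Real.sqrt (p k x * p j x) ∂μ :=
      Finset.single_le_sum (f := fun j => π j * ∫ x, Real.sqrt (p k x * p j x) ∂μ)
        (fun j _ => mul_nonneg (hπ_pos j).le (integral_nonneg fun x => Real.sqrt_nonneg _))
        (Finset.mem_univ k)
    rw [h1, mul_one] at h2
    exact lt_of_lt_of_le (hπ_pos k) h2
  -- Cauchy–Schwarz: `s x ≤ √(mix x)`
  have hcs : ∀ x, (∑ j, π j * Real.sqrt (p j x)) ≤ Real.sqrt (∑ j, π j * p j x) := by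
    intro x
    refine (Real.le_sqrt (hs_nonneg x) (hmix_nonneg x)).mpr ?_
    calc (∑ j, π j * Real.sqrt (p j x)) ^ 2
        = (∑ j, Real.sqrt (π j) * (Real.sqrt (π j) * Real.sqrt (p j x))) ^ 2 := by
          congr 1
          refine Finset.sum_congr rfl fun j _ => ?_
          rw [← mul_assoc, Real.mul_self_sqrt (hπ_pos j).le]
      _ ≤ (∑ j, Real.sqrt (π j) ^ 2) * ∑ j, (Real.sqrt (π j) * Real.sqrt (p j x)) ^ 2 :=
          Finset.sum_mul_sq_le_sq_mul_sq _ _ _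
      _ = ∑ j, π j * p j x := by
          rw [show (∑ j, Real.sqrt (π j) ^ 2) = ∑ j, π j from
            Finset.sum_congr rfl fun j _ => Real.sq_sqrt (hπ_pos j).le, hπ_sum, one_mul]
          refine Finset.sum_congr rfl fun j _ => ?_
          rw [mul_pow, Real.sq_sqrt (hπ_pos j).le, Real.sq_sqrt (hp_nonneg j x)]
  -- lower bound for the Jensen term
  have hg_lb : ∀ k x, p k x * Real.log (π k) ≤
      p k x * Real.log ((∑ j, π j * Real.sqrt (p j x)) / Real.sqrt (p k x)) := by
    intro k x
    rcases eq_or_lt_of_le (hp_nonneg k x) with h0 | h0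
    · rw [← h0]
      simp
    · have hsp : 0 < Real.sqrt (p k x) := Real.sqrt_pos.mpr h0
      have h1 : π k ≤ (∑ j, π j * Real.sqrt (p j x)) / Real.sqrt (p k x) := by
        rw [le_div_iff₀ hsp]
        exact Finset.single_le_sum (f := fun j => π j * Real.sqrt (p j x))
          (fun j _ => mul_nonneg (hπ_pos j).le (Real.sqrt_nonneg _)) (Finset.mem_univ k)
      exact mul_le_mul_of_nonneg_left (Real.log_le_log (hπ_pos k) h1) (hp_nonneg k x)
  -- upper bound for the Jensen term
  have hg_ub : ∀ k x,
      p k x * Real.log ((∑ j, π j * Real.sqrt (p j x)) / Real.sqrt (p k x)) ≤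
      -(1/2) * (p k x * Real.log (p k x / ∑ j, π j * p j x)) := by
    intro k x
    rcases eq_or_lt_of_le (hp_nonneg k x) with h0 | h0
    · rw [← h0]
      simp
    · have hsp : 0 < Real.sqrt (p k x) := Real.sqrt_pos.mpr h0
      have hm := hmix_pos k x h0
      have hsx := hs_pos k x h0
      have h1 : (∑ j, π j * Real.sqrt (p j x)) / Real.sqrt (p k x) ≤
          Real.sqrt ((∑ j, π j * p j x) / p k x) := by
        rw [Real.sqrt_div (hmix_nonneg x)]
        exact (div_le_div_iff_of_pos_right hsp).mpr (hcs x)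
      have h2 : Real.log ((∑ j, π j * Real.sqrt (p j x)) / Real.sqrt (p k x)) ≤
          Real.log (Real.sqrt ((∑ j, π j * p j x) / p k x)) :=
        Real.log_le_log (div_pos hsx hsp) h1
      rw [Real.log_sqrt (le_of_lt (div_pos hm h0))] at h2
      have h3 : Real.log ((∑ j, π j * p j x) / p k x) =
          - Real.log (p k x / ∑ j, π j * p j x) := by
        rw [← Real.log_inv]
        congr 1
        rw [inv_div]
      rw [h3] at h2
      have h5 := mul_le_mul_of_nonneg_left h2 (hp_nonneg k x)
      calc p k x * Real.log ((∑ j, π j * Real.sqrt (p j x)) / Real.sqrt (p k x))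
          ≤ p k x * (-Real.log (p k x / ∑ j, π j * p j x) / 2) := h5
        _ = -(1/2) * (p k x * Real.log (p k x / ∑ j, π j * p j x)) := by ring
  -- integrability of the Jensen term
  have hg_int : ∀ k, Integrable (fun x =>
      p k x * Real.log ((∑ j, π j * Real.sqrt (p j x)) / Real.sqrt (p k x))) μ := by
    intro k
    have hb : Integrable (fun x => |p k x * Real.log (π k)| +
        |(-(1/2)) * (p k x * Real.log (p k x / ∑ j, π j * p j x))|) μ :=
      (((hp_int k).mul_const _).abs).add (((hI k).const_mul _).abs)
    refine hb.mono' (hg_meas k).aestronglyMeasurable ?_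
    filter_upwards with x
    rw [Real.norm_eq_abs, abs_le]
    constructor
    · have hl := hg_lb k x
      have h1 := neg_abs_le (p k x * Real.log (π k))
      have h2 := abs_nonneg ((-(1/2)) * (p k x * Real.log (p k x / ∑ j, π j * p j x)))
      linarith
    · have hu := hg_ub k x
      have h1 := le_abs_self ((-(1/2)) * (p k x * Real.log (p k x / ∑ j, π j * p j x)))
      have h2 := abs_nonneg (p k x * Real.log (π k))
      linarith
  -- Jensen's inequality: `∫ g k ≤ log (S k)`
  have hg_le : ∀ k,
      (∫ x, p k x * Real.log ((∑ j, π j * Real.sqrt (p j x)) / Real.sqrt (p k x)) ∂μ) ≤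
      Real.log (∑ j, π j * ∫ x, Real.sqrt (p k x * p j x) ∂μ) := by
    intro k
    have hpt : ∀ x,
        p k x * Real.log ((∑ j, π j * Real.sqrt (p j x)) / Real.sqrt (p k x)) ≤
        p k x * Real.log (∑ j, π j * ∫ y, Real.sqrt (p k y * p j y) ∂μ) +
        (Real.sqrt (p k x) * (∑ j, π j * Real.sqrt (p j x)) /
          (∑ j, π j * ∫ y, Real.sqrt (p k y * p j y) ∂μ) - p k x) := by
      intro x
      rcases eq_or_lt_of_le (hp_nonneg k x) with h0 | h0
      · rw [← h0]
        simp
      · have hsp : 0 < Real.sqrt (p k x) := Real.sqrt_pos.mpr h0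
        have hsx := hs_pos k x h0
        have hu : 0 < (∑ j, π j * Real.sqrt (p j x)) / Real.sqrt (p k x) :=
          div_pos hsx hsp
        have h2 := Real.log_le_sub_one_of_pos (div_pos hu (hS_pos k))
        rw [Real.log_div hu.ne' (hS_pos k).ne'] at h2
        have h4 : p k x * ((∑ j, π j * Real.sqrt (p j x)) / Real.sqrt (p k x) /
            (∑ j, π j * ∫ y, Real.sqrt (p k y * p j y) ∂μ)) =
            Real.sqrt (p k x) * (∑ j, π j * Real.sqrt (p j x)) /
            (∑ j, π j * ∫ y, Real.sqrt (p k y * p j y) ∂μ) := by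
          calc p k x * ((∑ j, π j * Real.sqrt (p j x)) / Real.sqrt (p k x) /
              (∑ j, π j * ∫ y, Real.sqrt (p k y * p j y) ∂μ))
              = p k x / Real.sqrt (p k x) * ((∑ j, π j * Real.sqrt (p j x)) /
                (∑ j, π j * ∫ y, Real.sqrt (p k y * p j y) ∂μ)) := by ring
            _ = Real.sqrt (p k x) * ((∑ j, π j * Real.sqrt (p j x)) /
                (∑ j, π j * ∫ y, Real.sqrt (p k y * p j y) ∂μ)) := by rw [Real.div_sqrt]
            _ = Real.sqrt (p k x) * (∑ j, π j * Real.sqrt (p j x)) /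
                (∑ j, π j * ∫ y, Real.sqrt (p k y * p j y) ∂μ) := by ring
        have h5 := mul_le_mul_of_nonneg_left h2 (hp_nonneg k x)
        rw [mul_sub, mul_sub, mul_one, h4] at h5
        linarith
    have hint1 : Integrable (fun x =>
        p k x * Real.log (∑ j, π j * ∫ y, Real.sqrt (p k y * p j y) ∂μ)) μ :=
      (hp_int k).mul_const _
    have hint3 : Integrable (fun x => Real.sqrt (p k x) * (∑ j, π j * Real.sqrt (p j x)) /
        (∑ j, π j * ∫ y, Real.sqrt (p k y * p j y) ∂μ)) μ :=
      (hsk_int k).div_const _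
    have hint2 : Integrable (fun x => Real.sqrt (p k x) * (∑ j, π j * Real.sqrt (p j x)) /
        (∑ j, π j * ∫ y, Real.sqrt (p k y * p j y) ∂μ) - p k x) μ :=
      hint3.sub (hp_int k)
    have hrhs_int : Integrable (fun x =>
        p k x * Real.log (∑ j, π j * ∫ y, Real.sqrt (p k y * p j y) ∂μ) +
        (Real.sqrt (p k x) * (∑ j, π j * Real.sqrt (p j x)) /
          (∑ j, π j * ∫ y, Real.sqrt (p k y * p j y) ∂μ) - p k x)) μ :=
      hint1.add hint2
    have h7 := integral_mono (hg_int k) hrhs_int hpt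
    rw [integral_add hint1 hint2, integral_sub hint3 (hp_int k),
      integral_mul_const, integral_div, hS_eq k, hp_prob k, one_mul,
      div_self (hS_pos k).ne'] at h7
    linarith
  -- assembling everything
  have h0 : 0 ≤ ∑ k, π k * ((∫ x, p k x * Real.log (p k x / ∑ j, π j * p j x) ∂μ) +
      ∫ x, p k x * Real.log ((∑ j, π j * Real.sqrt (p j x)) / Real.sqrt (p k x)) ∂μ) := by
    have h1 : 0 ≤ ∫ x, ∑ k, π k * (p k x * Real.log (p k x / ∑ j, π j * p j x) +
        p k x * Real.log ((∑ j, π j * Real.sqrt (p j x)) / Real.sqrt (p k x))) ∂μ :=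
      integral_nonneg fun x => aux_pointwise π (fun k => p k x) hπ_pos
        (fun k => hp_nonneg k x)
    have hfg_int : ∀ k, Integrable (fun x =>
        π k * (p k x * Real.log (p k x / ∑ j, π j * p j x) +
          p k x * Real.log ((∑ j, π j * Real.sqrt (p j x)) / Real.sqrt (p k x)))) μ := by
      intro k
      have ha : Integrable (fun x => p k x * Real.log (p k x / ∑ j, π j * p j x) +
          p k x * Real.log ((∑ j, π j * Real.sqrt (p j x)) / Real.sqrt (p k x))) μ :=
        (hI k).add (hg_int k)
      exact ha.const_mul (π k)
    rwa [integral_finset_sum _ (fun k _ => hfg_int k),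
      Finset.sum_congr rfl (fun k (_ : k ∈ Finset.univ) => by
        rw [integral_const_mul, integral_add (hI k) (hg_int k)])] at h1
  have h2 : ∑ k, π k *
      (∫ x, p k x * Real.log ((∑ j, π j * Real.sqrt (p j x)) / Real.sqrt (p k x)) ∂μ) ≤
      ∑ k, π k * Real.log (∑ j, π j * ∫ x, Real.sqrt (p k x * p j x) ∂μ) :=
    Finset.sum_le_sum fun k _ => mul_le_mul_of_nonneg_left (hg_le k) (hπ_pos k).le
  have h3 : ∑ k, π k * ((∫ x, p k x * Real.log (p k x / ∑ j, π j * p j x) ∂μ) +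
      ∫ x, p k x * Real.log ((∑ j, π j * Real.sqrt (p j x)) / Real.sqrt (p k x)) ∂μ) =
      (∑ k, π k * ∫ x, p k x * Real.log (p k x / ∑ j, π j * p j x) ∂μ) +
      ∑ k, π k *
        ∫ x, p k x * Real.log ((∑ j, π j * Real.sqrt (p j x)) / Real.sqrt (p k x)) ∂μ := by
    calc ∑ k, π k * ((∫ x, p k x * Real.log (p k x / ∑ j, π j * p j x) ∂μ) +
        ∫ x, p k x * Real.log ((∑ j, π j * Real.sqrt (p j x)) / Real.sqrt (p k x)) ∂μ)
        = ∑ k, ((π k * ∫ x, p k x * Real.log (p k x / ∑ j, π j * p j x) ∂μ) +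
          π k * ∫ x, p k x * Real.log ((∑ j, π j * Real.sqrt (p j x)) /
            Real.sqrt (p k x)) ∂μ) :=
          Finset.sum_congr rfl fun k _ => by ring
      _ = _ := Finset.sum_add_distrib
  linarith
end

section
/- Entropy upper bound on the Bayes error (Kovalevskij bound, multiclass): Let (Ω, μ) be a σ-finite measure space, let p₁, …, p_M be probability densities with respect to μ, and let π₁, …, π_M > 0 with Σ_{k=1}^M π_k = 1. Set p = Σ_{j=1}^M π_j p_j, and assume the conditional Shannon entropy H = −∫ Σ_{k=1}^M π_k p_k(x) log₂( π_k p_k(x) / p(x) ) dμ(x) is finite. Then the Bayes misclassification probability P_e = 1 − ∫ max{π₁ p₁(x), …, π_M p_M(x)} dμ(x) satisfies P_e ≤ (1/2) H. -/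
open MeasureTheory

private lemma logA {m : ℝ} (hm0 : 0 < m) (hm : m ≤ 1/2) :
    2 * Real.log 2 * (1 - m) ≤ -Real.log m := by
  have h1 : Real.log (2*m) ≤ 2*m - 1 := Real.log_le_sub_one_of_pos (by linarith)
  rw [Real.log_mul (by norm_num) (ne_of_gt hm0)] at h1
  have h2 : Real.log 2 < 1 := by linarith [Real.log_two_lt_d9]
  nlinarith [mul_nonneg (by linarith : (0:ℝ) ≤ 1 - 2*m)
    (by linarith : (0:ℝ) ≤ 1 - Real.log 2)]

private lemma logB2 {m : ℝ} (hm : 1/2 ≤ m) (hm1 : m ≤ 1) :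
    (1 - m) * Real.log 2 ≤ -(m * Real.log m) := by
  have hc := Real.concaveOn_negMulLog.2 (Set.mem_Ici.2 (by norm_num : (0:ℝ) ≤ 1/2))
      (Set.mem_Ici.2 (by norm_num : (0:ℝ) ≤ 1)) (by linarith : (0:ℝ) ≤ 2 - 2*m)
      (by linarith : (0:ℝ) ≤ 2*m - 1) (by ring)
  have e1 : (2-2*m) • (1/2:ℝ) + (2*m-1) • (1:ℝ) = m := by
    simp only [smul_eq_mul]; ring
  rw [e1] at hc
  have e2 : Real.negMulLog (1/2) = (1/2) * Real.log 2 := by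
    rw [show (1/2:ℝ) = 2⁻¹ by norm_num]
    simp [Real.negMulLog, Real.log_inv]
  rw [e2, Real.negMulLog_one] at hc
  have e3 : Real.negMulLog m = -(m * Real.log m) := by
    simp [Real.negMulLog]
  rw [e3] at hc
  simp only [smul_eq_mul] at hc
  nlinarith [hc]

private lemma entropy_ge {M : ℕ} (q : Fin M → ℝ)
    (h0 : ∀ k, 0 ≤ q k) (h1 : ∑ k, q k = 1) (k₀ : Fin M) (hk₀ : ∀ j, q j ≤ q k₀) :
    2 * (1 - q k₀) ≤ -∑ k, q k * Real.logb 2 (q k) := by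
  have hl2 : (0:ℝ) < Real.log 2 := Real.log_pos one_lt_two
  have hm1 : q k₀ ≤ 1 := by
    have := Finset.single_le_sum (f := q) (fun k _ => h0 k) (Finset.mem_univ k₀)
    linarith
  have hmpos : 0 < q k₀ := by
    by_contra h
    push_neg at h
    have hz : ∀ k, q k = 0 := fun k => le_antisymm (le_trans (hk₀ k) h) (h0 k)
    simp [hz] at h1
  rcases le_or_gt (q k₀) (1/2) with hm | hm
  · -- small max case
    have step : ∀ k, q k * Real.logb 2 (q k) ≤ q k * Real.logb 2 (q k₀) := by
      intro k
      rcases eq_or_lt_of_le (h0 k) with h | h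
      · simp [← h]
      · exact mul_le_mul_of_nonneg_left
          (Real.logb_le_logb_of_le one_lt_two h (hk₀ k)) (h0 k)
    have sum_le : ∑ k, q k * Real.logb 2 (q k) ≤ ∑ k, q k * Real.logb 2 (q k₀) :=
      Finset.sum_le_sum fun k _ => step k
    have sum_eq : ∑ k, q k * Real.logb 2 (q k₀) = Real.logb 2 (q k₀) := by
      rw [← Finset.sum_mul, h1, one_mul]
    have hA := logA hmpos hm
    have hlb : 2 * (1 - q k₀) ≤ -Real.logb 2 (q k₀) := by
      rw [Real.logb, ← neg_div, le_div_iff₀ hl2]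
      nlinarith
    linarith [sum_le, sum_eq.symm ▸ sum_le]
  · -- large max case
    set r := 1 - q k₀ with hr
    have hr0 : 0 ≤ r := by linarith
    have hrhalf : r ≤ 1/2 := by linarith
    have hsum' : ∑ k ∈ Finset.univ.erase k₀, q k = r := by
      have h := Finset.add_sum_erase Finset.univ q (Finset.mem_univ k₀)
      rw [h1] at h
      linarith
    have hqk : ∀ k ∈ Finset.univ.erase k₀, q k ≤ r := by
      intro k hk
      have := Finset.single_le_sum (f := q) (fun j _ => h0 j) hk
      linarith [hsum']
    have hterm : ∀ k ∈ Finset.univ.erase k₀,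
        q k * Real.logb 2 (q k) ≤ q k * Real.logb 2 r := by
      intro k hk
      rcases eq_or_lt_of_le (h0 k) with h | h
      · simp [← h]
      · exact mul_le_mul_of_nonneg_left
          (Real.logb_le_logb_of_le one_lt_two h (hqk k hk)) (h0 k)
    have hsum_le : ∑ k ∈ Finset.univ.erase k₀, q k * Real.logb 2 (q k)
        ≤ r * Real.logb 2 r := by
      calc ∑ k ∈ Finset.univ.erase k₀, q k * Real.logb 2 (q k)
          ≤ ∑ k ∈ Finset.univ.erase k₀, q k * Real.logb 2 r :=
            Finset.sum_le_sum hterm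
        _ = r * Real.logb 2 r := by rw [← Finset.sum_mul, hsum']
    have hB1 : r * Real.logb 2 r ≤ -r := by
      rcases eq_or_lt_of_le hr0 with h | h
      · simp [← h]
      · have hlog : Real.logb 2 r ≤ -1 := by
          have := Real.logb_le_logb_of_le one_lt_two h hrhalf
          have h12 : Real.logb 2 (1/2 : ℝ) = -1 := by
            rw [show (1/2:ℝ) = 2⁻¹ by norm_num, Real.logb_inv,
              Real.logb_self_eq_one one_lt_two]
          linarith [this, h12]
        nlinarith
    have hB2 : q k₀ * Real.logb 2 (q k₀) ≤ -r := by
      have hb2 := logB2 hm.le hm1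
      rw [Real.logb]
      have : q k₀ * (Real.log (q k₀) / Real.log 2) = (q k₀ * Real.log (q k₀)) / Real.log 2 := by
        ring
      rw [this, div_le_iff₀ hl2]
      nlinarith
    have hsplit : ∑ k, q k * Real.logb 2 (q k)
        = q k₀ * Real.logb 2 (q k₀) + ∑ k ∈ Finset.univ.erase k₀, q k * Real.logb 2 (q k) :=
      (Finset.add_sum_erase Finset.univ (fun k => q k * Real.logb 2 (q k))
        (Finset.mem_univ k₀)).symm
    rw [hsplit]
    linarith

private lemma pointwise_key {M : ℕ} (hM : 0 < M) (a : Fin M → ℝ) (h0 : ∀ k, 0 ≤ a k) :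
    (∑ k, a k) - (⨆ k, a k) ≤
      (1 / 2) * (-(∑ k, a k * Real.logb 2 (a k / ∑ j, a j))) := by
  haveI : Nonempty (Fin M) := ⟨⟨0, hM⟩⟩
  obtain ⟨k₀, hk₀⟩ := Finite.exists_max a
  have hsup : (⨆ k, a k) = a k₀ :=
    le_antisymm (ciSup_le hk₀) (le_ciSup (Set.Finite.bddAbove (Set.finite_range a)) k₀)
  rcases eq_or_lt_of_le (Finset.sum_nonneg fun k (_ : k ∈ Finset.univ) => h0 k) with hs0 | hs0
  · have hz : ∀ k, a k = 0 := by
      intro k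
      have h := Finset.single_le_sum (f := a) (fun j _ => h0 j) (Finset.mem_univ k)
      have := h0 k
      linarith [hs0.symm ▸ h]
    simp [hsup, hz]
  · have hs_ne : (∑ j, a j) ≠ 0 := ne_of_gt hs0
    have hq0 : ∀ k, 0 ≤ a k / ∑ j, a j := fun k => div_nonneg (h0 k) hs0.le
    have hq1 : ∑ k, a k / ∑ j, a j = 1 := by
      rw [← Finset.sum_div]; exact div_self hs_ne
    have hqmax : ∀ j, a j / (∑ i, a i) ≤ a k₀ / (∑ i, a i) := fun j => by
      gcongr
      exact hk₀ j
    have key := entropy_ge (fun k => a k / ∑ j, a j) hq0 hq1 k₀ hqmax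
    have hsum_eq : ∑ k, a k * Real.logb 2 (a k / ∑ j, a j)
        = (∑ j, a j) * ∑ k, (a k / ∑ j, a j) * Real.logb 2 (a k / ∑ j, a j) := by
      rw [Finset.mul_sum]
      refine Finset.sum_congr rfl fun k _ => ?_
      field_simp
    have hdiv : a k₀ / (∑ j, a j) * (∑ j, a j) = a k₀ := div_mul_cancel₀ _ hs_ne
    rw [hsup, hsum_eq]
    nlinarith [mul_le_mul_of_nonneg_left key hs0.le]

/-- **Entropy upper bound on the Bayes error (Kovalevskij bound, multiclass).**
For probability densities `p k` w.r.t. a σ-finite measure `μ` and positive priors `π`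
summing to 1 with mixture `mix = Σ_j π j • p j`, if the conditional Shannon entropy
`H = -∫ Σ_k π k p k log₂ (π k p k / mix) dμ` is finite (integrability of the integrand),
then the Bayes misclassification probability
`P_e = 1 - ∫ max_k (π k p k) dμ` satisfies `P_e ≤ H / 2`. -/
theorem bayes_error_le_half_entropy
    {Ω : Type*} [MeasurableSpace Ω] (μ : Measure Ω) [SigmaFinite μ]
    (M : ℕ) (hM : 0 < M) (p : Fin M → Ω → ℝ) (π : Fin M → ℝ)
    (hp_meas : ∀ k, Measurable (p k))
    (hp_nonneg : ∀ k, ∀ x, 0 ≤ p k x)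
    (hp_prob : ∀ k, ∫ x, p k x ∂μ = 1)
    (hπ_pos : ∀ k, 0 < π k) (hπ_sum : ∑ k, π k = 1)
    (hH_fin : Integrable
      (fun x => ∑ k, π k * p k x * Real.logb 2 (π k * p k x / (∑ j, π j * p j x))) μ) :
    1 - ∫ x, (⨆ k, π k * p k x) ∂μ ≤
      (1 / 2) *
        (-∫ x, ∑ k, π k * p k x * Real.logb 2 (π k * p k x / (∑ j, π j * p j x)) ∂μ) := by
  haveI : Nonempty (Fin M) := ⟨⟨0, hM⟩⟩
  have hpint : ∀ k, Integrable (p k) μ := by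
    intro k
    by_contra h
    have := hp_prob k
    rw [integral_undef h] at this
    norm_num at this
  have hterm_int : ∀ k, Integrable (fun x => π k * p k x) μ :=
    fun k => (hpint k).const_mul (π k)
  have hsint : Integrable (fun x => ∑ k, π k * p k x) μ :=
    integrable_finset_sum _ fun k _ => hterm_int k
  have hs_val : ∫ x, (∑ k, π k * p k x) ∂μ = 1 := by
    rw [integral_finset_sum _ fun k _ => hterm_int k]
    simp_rw [integral_const_mul, hp_prob, mul_one]
    exact hπ_sum
  have hg_meas : Measurable (fun x => ⨆ k, π k * p k x) :=
    Measurable.iSup fun k => (hp_meas k).const_mul (π k)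
  have ha_nonneg : ∀ x k, 0 ≤ π k * p k x :=
    fun x k => mul_nonneg (hπ_pos k).le (hp_nonneg k x)
  have hg_nonneg : ∀ x, 0 ≤ ⨆ k, π k * p k x := fun x =>
    le_trans (ha_nonneg x ⟨0, hM⟩)
      (le_ciSup (f := fun k => π k * p k x)
        (Set.Finite.bddAbove (Set.finite_range _)) (⟨0, hM⟩ : Fin M))
  have hg_le : ∀ x, (⨆ k, π k * p k x) ≤ ∑ k, π k * p k x := fun x =>
    ciSup_le fun k =>
      Finset.single_le_sum (f := fun j => π j * p j x)
        (fun j _ => ha_nonneg x j) (Finset.mem_univ k)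
  have hgint : Integrable (fun x => ⨆ k, π k * p k x) μ :=
    hsint.mono' hg_meas.aestronglyMeasurable
      (Filter.Eventually.of_forall fun x => by
        rw [Real.norm_eq_abs, abs_of_nonneg (hg_nonneg x)]
        exact hg_le x)
  have hrhs_int : Integrable (fun x => (1 / 2 : ℝ) *
      (-(∑ k, π k * p k x * Real.logb 2 (π k * p k x / ∑ j, π j * p j x)))) μ :=
    hH_fin.neg.const_mul _
  have hmono : ∫ x, ((∑ k, π k * p k x) - ⨆ k, π k * p k x) ∂μ ≤
      ∫ x, (1 / 2 : ℝ) *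
        (-(∑ k, π k * p k x * Real.logb 2 (π k * p k x / ∑ j, π j * p j x))) ∂μ := by
    refine integral_mono (hsint.sub hgint) hrhs_int fun x => ?_
    exact pointwise_key hM (fun k => π k * p k x) (ha_nonneg x)
  rw [integral_sub hsint hgint, hs_val, integral_const_mul, integral_neg] at hmono
  exact hmono
end

section
/- Existence and uniqueness of the Bhattacharyya exponential tilt: Let p and q be probability densities on (0,∞) (with respect to Lebesgue measure) that are not equal almost everywhere, with ∫₀^∞ √(p(x) q(x)) dx > 0. Suppose there exists γ₁ > 0 such that 1 ≤ ∫₀^∞ e^{γ₁ x} √(p(x) q(x)) dx < ∞. Then there exists a unique γ ∈ (0, γ₁] such that ∫₀^∞ e^{γ x} √(p(x) q(x)) dx = 1. -/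
open MeasureTheory Set

/-- **Existence and uniqueness of the Bhattacharyya exponential tilt.**
Let `p, q` be probability densities on `(0,∞)` (w.r.t. Lebesgue measure) that are not
equal a.e., with positive Bhattacharyya affinity, and suppose there is `γ₁ > 0` with
`1 ≤ ∫₀^∞ e^{γ₁ x} √(p q) dx < ∞`.  Then there is a unique `γ ∈ (0, γ₁]` with
`∫₀^∞ e^{γ x} √(p q) dx = 1`. -/
theorem bhattacharyya_tilt_exists_unique
    (p q : ℝ → ℝ)
    (hp_meas : Measurable p) (hq_meas : Measurable q)
    (hp_nonneg : ∀ x, 0 ≤ p x) (hq_nonneg : ∀ x, 0 ≤ q x)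
    (hp_zero : ∀ x ≤ (0 : ℝ), p x = 0) (hq_zero : ∀ x ≤ (0 : ℝ), q x = 0)
    (hp_prob : ∫ x in Ioi (0 : ℝ), p x = 1) (hq_prob : ∫ x in Ioi (0 : ℝ), q x = 1)
    (hne : ¬ p =ᵐ[volume] q)
    (hpos : 0 < ∫ x in Ioi (0 : ℝ), Real.sqrt (p x * q x))
    (γ₁ : ℝ) (hγ₁ : 0 < γ₁)
    (hγ₁_int : IntegrableOn (fun x => Real.exp (γ₁ * x) * Real.sqrt (p x * q x)) (Ioi 0))
    (hγ₁_ge : 1 ≤ ∫ x in Ioi (0 : ℝ), Real.exp (γ₁ * x) * Real.sqrt (p x * q x)) :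
    ∃! γ : ℝ, γ ∈ Ioc 0 γ₁ ∧
      ∫ x in Ioi (0 : ℝ), Real.exp (γ * x) * Real.sqrt (p x * q x) = 1 := by
  set r : ℝ → ℝ := fun x => Real.sqrt (p x * q x) with hr_def
  have hr_meas : Measurable r := (hp_meas.mul hq_meas).sqrt
  have hr_nonneg : ∀ x, 0 ≤ r x := fun x => Real.sqrt_nonneg _
  set F : ℝ → ℝ := fun γ => ∫ x in Ioi (0 : ℝ), Real.exp (γ * x) * r x with hF_def
  -- integrability for γ ≤ γ₁
  have hint : ∀ γ ≤ γ₁, IntegrableOn (fun x => Real.exp (γ * x) * r x) (Ioi 0) := by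
    intro γ hγ
    apply Integrable.mono' hγ₁_int
    · exact ((Real.measurable_exp.comp (measurable_const.mul measurable_id)).mul
        hr_meas).aestronglyMeasurable
    · filter_upwards [self_mem_ae_restrict measurableSet_Ioi] with x hx
      rw [Real.norm_eq_abs, abs_of_nonneg (mul_nonneg (Real.exp_pos _).le (hr_nonneg x))]
      exact mul_le_mul_of_nonneg_right
        (Real.exp_le_exp.mpr (mul_le_mul_of_nonneg_right hγ (mem_Ioi.mp hx).le)) (hr_nonneg x)
  have hr_int : IntegrableOn r (Ioi 0) := by
    have := hint 0 hγ₁.le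
    simpa using this
  have hp_int : IntegrableOn p (Ioi 0) := by
    by_contra h
    rw [integral_undef h] at hp_prob; norm_num at hp_prob
  have hq_int : IntegrableOn q (Ioi 0) := by
    by_contra h
    rw [integral_undef h] at hq_prob; norm_num at hq_prob
  -- positive measure support of r
  have hsupp : 0 < volume (Function.support r ∩ Ioi 0) := by
    have := (setIntegral_pos_iff_support_of_nonneg_ae
      (Filter.Eventually.of_forall (fun x => hr_nonneg x)) hr_int).mp hpos
    exact this
  -- strict monotonicity
  have hmono : ∀ a b : ℝ, 0 ≤ a → a < b → b ≤ γ₁ → F a < F b := by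
    intro a b ha hab hb
    have hia := hint a (hab.le.trans hb)
    have hib := hint b hb
    have hdiff : 0 < ∫ x in Ioi (0 : ℝ), (Real.exp (b * x) - Real.exp (a * x)) * r x := by
      rw [setIntegral_pos_iff_support_of_nonneg_ae]
      · refine lt_of_lt_of_le hsupp (measure_mono ?_)
        rintro x ⟨hxr, hx⟩
        refine ⟨?_, hx⟩
        simp only [Function.mem_support] at hxr ⊢
        have hx0 : 0 < x := mem_Ioi.mp hx
        have hlt : Real.exp (a * x) < Real.exp (b * x) :=
          Real.exp_lt_exp.mpr (by nlinarith)
        exact ne_of_gt (mul_pos (sub_pos.mpr hlt) ((hr_nonneg x).lt_of_ne (Ne.symm hxr)))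
      · filter_upwards [self_mem_ae_restrict measurableSet_Ioi] with x hx
        have hx0 : 0 < x := mem_Ioi.mp hx
        have hle : Real.exp (a * x) ≤ Real.exp (b * x) :=
          Real.exp_le_exp.mpr (by nlinarith)
        exact mul_nonneg (sub_nonneg.mpr hle) (hr_nonneg x)
      · have := hib.sub hia
        refine this.congr (Filter.Eventually.of_forall fun x => ?_)
        simp only [Pi.sub_apply]; ring
    have heq : ∫ x in Ioi (0 : ℝ), (Real.exp (b * x) - Real.exp (a * x)) * r x = F b - F a := by
      rw [hF_def]
      rw [← integral_sub hib hia]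
      congr 1; funext x; ring
    rw [heq] at hdiff
    linarith
  -- F 0 < 1
  have hF0 : F 0 < 1 := by
    have hkey : 0 < ∫ x in Ioi (0 : ℝ), (Real.sqrt (p x) - Real.sqrt (q x)) ^ 2 := by
      have hpt : ∀ x, (Real.sqrt (p x) - Real.sqrt (q x)) ^ 2 = p x + q x - 2 * r x := by
        intro x
        have h1 : Real.sqrt (p x) ^ 2 = p x := Real.sq_sqrt (hp_nonneg x)
        have h2 : Real.sqrt (q x) ^ 2 = q x := Real.sq_sqrt (hq_nonneg x)
        have h3 : Real.sqrt (p x) * Real.sqrt (q x) = r x :=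
          (Real.sqrt_mul (hp_nonneg x) (q x)).symm
        nlinarith [h1, h2, h3]
      rw [setIntegral_pos_iff_support_of_nonneg_ae]
      · have hne' : 0 < volume {x | p x ≠ q x} := by
          rw [Filter.EventuallyEq, ae_iff] at hne
          exact pos_iff_ne_zero.mpr (by simpa using hne)
        refine lt_of_lt_of_le hne' (measure_mono ?_)
        intro x hx
        simp only [mem_setOf_eq] at hx
        have hx0 : 0 < x := by
          by_contra h
          push_neg at h
          exact hx (by rw [hp_zero x h, hq_zero x h])
        refine ⟨?_, mem_Ioi.mpr hx0⟩
        simp only [Function.mem_support]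
        intro hc
        have : Real.sqrt (p x) = Real.sqrt (q x) := by
          have := sq_eq_zero_iff.mp hc
          linarith [this]
        exact hx (by
          have := congrArg (fun t => t ^ 2) this
          simpa [Real.sq_sqrt (hp_nonneg x), Real.sq_sqrt (hq_nonneg x)] using this)
      · exact Filter.Eventually.of_forall fun x => sq_nonneg _
      · have : IntegrableOn (fun x => p x + q x - 2 * r x) (Ioi 0) :=
          (hp_int.add hq_int).sub (hr_int.const_mul 2)
        exact this.congr (Filter.Eventually.of_forall fun x => (hpt x).symm)
    have heq : ∫ x in Ioi (0 : ℝ), (Real.sqrt (p x) - Real.sqrt (q x)) ^ 2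
        = 1 + 1 - 2 * ∫ x in Ioi (0 : ℝ), r x := by
      have h1 : ∫ x in Ioi (0 : ℝ), (Real.sqrt (p x) - Real.sqrt (q x)) ^ 2
          = ∫ x in Ioi (0 : ℝ), (p x + q x - 2 * r x) := by
        congr 1; funext x
        have h1 : Real.sqrt (p x) ^ 2 = p x := Real.sq_sqrt (hp_nonneg x)
        have h2 : Real.sqrt (q x) ^ 2 = q x := Real.sq_sqrt (hq_nonneg x)
        have h3 : Real.sqrt (p x) * Real.sqrt (q x) = r x :=
          (Real.sqrt_mul (hp_nonneg x) (q x)).symm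
        nlinarith [h1, h2, h3]
      have hpq : Integrable (fun x => p x + q x) (volume.restrict (Ioi 0)) :=
        hp_int.add hq_int
      have h2r : Integrable (fun x => 2 * r x) (volume.restrict (Ioi 0)) :=
        hr_int.const_mul 2
      rw [h1, integral_sub hpq h2r, integral_add hp_int hq_int, integral_const_mul,
        hp_prob, hq_prob]
    have hF0eq : F 0 = ∫ x in Ioi (0 : ℝ), r x := by
      rw [hF_def]; simp
    rw [hF0eq]
    linarith
  -- continuity on Iic γ₁
  have hcont : ContinuousOn F (Iic γ₁) := by
    intro γ₀ hγ₀
    apply continuousWithinAt_of_dominated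
      (bound := fun x => Real.exp (γ₁ * x) * r x)
    · filter_upwards [self_mem_nhdsWithin] with γ _
      exact ((Real.measurable_exp.comp (measurable_const.mul measurable_id)).mul
        hr_meas).aestronglyMeasurable
    · filter_upwards [self_mem_nhdsWithin] with γ hγ
      filter_upwards [self_mem_ae_restrict measurableSet_Ioi] with x hx
      rw [Real.norm_eq_abs, abs_of_nonneg (mul_nonneg (Real.exp_pos _).le (hr_nonneg x))]
      exact mul_le_mul_of_nonneg_right
        (Real.exp_le_exp.mpr (mul_le_mul_of_nonneg_right hγ (mem_Ioi.mp hx).le)) (hr_nonneg x)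
    · exact hγ₁_int
    · refine Filter.Eventually.of_forall fun x => ?_
      exact (((Real.continuous_exp.comp (continuous_id.mul continuous_const)).mul
        continuous_const).continuousAt).continuousWithinAt
  -- existence via IVT
  have hivt := intermediate_value_Icc hγ₁.le (hcont.mono Icc_subset_Iic_self)
  have h1mem : (1 : ℝ) ∈ Icc (F 0) (F γ₁) := ⟨hF0.le, hγ₁_ge⟩
  obtain ⟨γ, hγmem, hγeq⟩ := hivt h1mem
  have hγ0 : 0 < γ := by
    rcases eq_or_lt_of_le hγmem.1 with h | h
    · exfalso; rw [← h] at hγeq; rw [hγeq] at hF0; exact lt_irrefl 1 hF0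
    · exact h
  refine ⟨γ, ⟨⟨hγ0, hγmem.2⟩, hγeq⟩, ?_⟩
  rintro γ' ⟨⟨hγ'0, hγ'le⟩, hγ'eq'⟩
  have hγ'eq : F γ' = 1 := hγ'eq'
  by_contra hne'
  rcases lt_or_gt_of_ne hne' with h | h
  · have := hmono γ' γ hγ'0.le h hγmem.2
    rw [hγ'eq, hγeq] at this; exact lt_irrefl 1 this
  · have := hmono γ γ' hγ0.le h hγ'le
    rw [hγ'eq, hγeq] at this; exact lt_irrefl 1 this
end

section
/- Finiteness of the tilted survivor integral under hazards bounded away from zero (Lemma 5): Let p and q be probability densities on (0,∞), everywhere positive on (0,∞), with survivor functions S_p(x) = ∫_x^∞ p(u) du, S_q(x) = ∫_x^∞ q(u) du (both positive for all x ≥ 0) and hazard functions h_p = p/S_p, h_q = q/S_q. Assume liminf_{x→∞} h_p(x) > 0 and liminf_{x→∞} h_q(x) > 0. If γ > 0 satisfies ∫₀^∞ e^{γ x} √(p(x) q(x)) dx = 1, then ∫₀^∞ e^{γ x} √(S_p(x) S_q(x)) dx < ∞. -/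
open MeasureTheory Set Filter

/-- **Finiteness of the tilted survivor integral under hazards bounded away from zero.**
Let `p, q` be probability densities on `(0,∞)`, positive on `(0,∞)`, with survivor
functions `S_p x = ∫_x^∞ p`, `S_q x = ∫_x^∞ q` positive for all `x ≥ 0`, and hazards
`h_p = p / S_p`, `h_q = q / S_q` having `liminf_{x→∞} h > 0` (i.e. eventually bounded
below by a positive constant).  If `γ > 0` satisfies `∫₀^∞ e^{γ x} √(p q) dx = 1`,
then `∫₀^∞ e^{γ x} √(S_p S_q) dx < ∞`. -/
theorem tilted_survivor_integrable
    (p q : ℝ → ℝ)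
    (hp_meas : Measurable p) (hq_meas : Measurable q)
    (hp_nonneg : ∀ x, 0 ≤ p x) (hq_nonneg : ∀ x, 0 ≤ q x)
    (hp_pos : ∀ x > (0 : ℝ), 0 < p x) (hq_pos : ∀ x > (0 : ℝ), 0 < q x)
    (hp_zero : ∀ x ≤ (0 : ℝ), p x = 0) (hq_zero : ∀ x ≤ (0 : ℝ), q x = 0)
    (hp_prob : ∫ x in Ioi (0 : ℝ), p x = 1) (hq_prob : ∫ x in Ioi (0 : ℝ), q x = 1)
    (hSp_pos : ∀ x ≥ (0 : ℝ), 0 < ∫ u in Ioi x, p u)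
    (hSq_pos : ∀ x ≥ (0 : ℝ), 0 < ∫ u in Ioi x, q u)
    (hhp : ∃ ε > (0 : ℝ), ∀ᶠ x in atTop, ε ≤ p x / ∫ u in Ioi x, p u)
    (hhq : ∃ ε > (0 : ℝ), ∀ᶠ x in atTop, ε ≤ q x / ∫ u in Ioi x, q u)
    (γ : ℝ) (hγ : 0 < γ)
    (htilt_int : IntegrableOn (fun x => Real.exp (γ * x) * Real.sqrt (p x * q x)) (Ioi 0))
    (htilt : ∫ x in Ioi (0 : ℝ), Real.exp (γ * x) * Real.sqrt (p x * q x) = 1) :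
    IntegrableOn
      (fun x => Real.exp (γ * x) * Real.sqrt ((∫ u in Ioi x, p u) * (∫ u in Ioi x, q u)))
      (Ioi 0) := by

  -- p and q are integrable on (0,∞)
  have hp_int : IntegrableOn p (Ioi 0) := by
    by_contra h
    rw [MeasureTheory.integral_undef h] at hp_prob
    norm_num at hp_prob
  have hq_int : IntegrableOn q (Ioi 0) := by
    by_contra h
    rw [MeasureTheory.integral_undef h] at hq_prob
    norm_num at hq_prob
  have hp_int' : ∀ x : ℝ, IntegrableOn p (Ioi x) := by
    intro x
    rcases le_or_gt 0 x with hx | hx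
    · exact hp_int.mono_set (Ioi_subset_Ioi hx)
    · have hdecomp : Ioi x = Ioc x 0 ∪ Ioi 0 := (Ioc_union_Ioi_eq_Ioi hx.le).symm
      rw [hdecomp]
      refine IntegrableOn.union ?_ hp_int
      have heq : EqOn (0 : ℝ → ℝ) p (Ioc x 0) := fun y hy => (hp_zero y hy.2).symm
      exact (integrableOn_zero).congr_fun heq measurableSet_Ioc
  have hq_int' : ∀ x : ℝ, IntegrableOn q (Ioi x) := by
    intro x
    rcases le_or_gt 0 x with hx | hx
    · exact hq_int.mono_set (Ioi_subset_Ioi hx)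
    · have hdecomp : Ioi x = Ioc x 0 ∪ Ioi 0 := (Ioc_union_Ioi_eq_Ioi hx.le).symm
      rw [hdecomp]
      refine IntegrableOn.union ?_ hq_int
      have heq : EqOn (0 : ℝ → ℝ) q (Ioc x 0) := fun y hy => (hq_zero y hy.2).symm
      exact (integrableOn_zero).congr_fun heq measurableSet_Ioc
  set Sp : ℝ → ℝ := fun x => ∫ u in Ioi x, p u with hSp_def
  set Sq : ℝ → ℝ := fun x => ∫ u in Ioi x, q u with hSq_def
  have hSp_anti : Antitone Sp := by
    intro x y hxy
    exact setIntegral_mono_set (hp_int' x)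
      (Filter.Eventually.of_forall fun u => hp_nonneg u)
      (HasSubset.Subset.eventuallyLE (Ioi_subset_Ioi hxy))
  have hSq_anti : Antitone Sq := by
    intro x y hxy
    exact setIntegral_mono_set (hq_int' x)
      (Filter.Eventually.of_forall fun u => hq_nonneg u)
      (HasSubset.Subset.eventuallyLE (Ioi_subset_Ioi hxy))
  have hSp_le_one : ∀ x ≥ (0:ℝ), Sp x ≤ 1 := fun x hx => hp_prob ▸ hSp_anti hx
  have hSq_le_one : ∀ x ≥ (0:ℝ), Sq x ≤ 1 := fun x hx => hq_prob ▸ hSq_anti hx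
  have hSp_meas : Measurable Sp := hSp_anti.measurable
  have hSq_meas : Measurable Sq := hSq_anti.measurable
  have hf_meas : AEStronglyMeasurable
      (fun x => Real.exp (γ * x) * Real.sqrt (Sp x * Sq x)) (volume.restrict (Ioi 0)) :=
    ((Real.measurable_exp.comp (measurable_const.mul measurable_id)).mul
      ((hSp_meas.mul hSq_meas).sqrt)).aestronglyMeasurable
  obtain ⟨ε₁, hε₁, hev₁⟩ := hhp
  obtain ⟨ε₂, hε₂, hev₂⟩ := hhq
  obtain ⟨M₁, hM₁⟩ := eventually_atTop.1 hev₁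
  obtain ⟨M₂, hM₂⟩ := eventually_atTop.1 hev₂
  set M : ℝ := max (max M₁ M₂) 0 with hM_def
  have hM0 : (0:ℝ) ≤ M := le_max_right _ _
  have hsplit : Ioi (0:ℝ) = Ioc 0 M ∪ Ioi M := (Ioc_union_Ioi_eq_Ioi hM0).symm
  rw [hsplit]
  refine IntegrableOn.union ?_ ?_
  · -- bounded on (0, M]
    refine Integrable.mono' (g := fun _ => Real.exp (γ * M))
      (integrable_const _) (hf_meas.mono_set Ioc_subset_Ioi_self)
      ((ae_restrict_iff' measurableSet_Ioc).2 (Filter.Eventually.of_forall fun x hx => ?_))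
    have hx0 : (0:ℝ) ≤ x := hx.1.le
    have h1 : Real.sqrt (Sp x * Sq x) ≤ 1 := by
      rw [show (1:ℝ) = Real.sqrt 1 by simp]
      apply Real.sqrt_le_sqrt
      calc Sp x * Sq x ≤ 1 * 1 := by
            apply mul_le_mul (hSp_le_one x hx0) (hSq_le_one x hx0)
              (hSq_pos x hx0).le zero_le_one
        _ = 1 := by ring
    rw [Real.norm_eq_abs, abs_of_nonneg (by positivity)]
    calc Real.exp (γ * x) * Real.sqrt (Sp x * Sq x)
        ≤ Real.exp (γ * x) * 1 := by
          exact mul_le_mul_of_nonneg_left h1 (Real.exp_pos _).le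
      _ = Real.exp (γ * x) := mul_one _
      _ ≤ Real.exp (γ * M) := Real.exp_le_exp.2 (mul_le_mul_of_nonneg_left hx.2 hγ.le)
  · -- dominated by C · e^{γx}√(pq) on (M, ∞)
    have hbase : IntegrableOn
        (fun x => (Real.sqrt (ε₁ * ε₂))⁻¹ * (Real.exp (γ * x) * Real.sqrt (p x * q x)))
        (Ioi M) :=
      ((htilt_int.mono_set (Ioi_subset_Ioi hM0)).const_mul _)
    refine Integrable.mono' hbase (hf_meas.mono_set (Ioi_subset_Ioi hM0))
      ((ae_restrict_iff' measurableSet_Ioi).2 (Filter.Eventually.of_forall fun x hx => ?_))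
    have hx0 : (0:ℝ) ≤ x := le_trans hM0 (le_of_lt hx)
    have hx1 : M₁ ≤ x := le_trans (le_trans (le_max_left _ _) (le_max_left _ _)) hx.le
    have hx2 : M₂ ≤ x := le_trans (le_trans (le_max_right _ _) (le_max_left _ _)) hx.le
    have hSpx : 0 < Sp x := hSp_pos x hx0
    have hSqx : 0 < Sq x := hSq_pos x hx0
    have h1 : ε₁ * Sp x ≤ p x := by
      have := hM₁ x hx1
      rw [le_div_iff₀ hSpx] at this
      exact this
    have h2 : ε₂ * Sq x ≤ q x := by
      have := hM₂ x hx2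
      rw [le_div_iff₀ hSqx] at this
      exact this
    have hprod : (ε₁ * ε₂) * (Sp x * Sq x) ≤ p x * q x := by
      have := mul_le_mul h1 h2 (by positivity) (hp_nonneg x)
      nlinarith
    have hsq : Real.sqrt (Sp x * Sq x)
        ≤ (Real.sqrt (ε₁ * ε₂))⁻¹ * Real.sqrt (p x * q x) := by
      rw [← Real.sqrt_inv, ← Real.sqrt_mul (by positivity)]
      apply Real.sqrt_le_sqrt
      have h3 : Sp x * Sq x ≤ (p x * q x) / (ε₁ * ε₂) :=
        (le_div_iff₀' (by positivity : (0:ℝ) < ε₁ * ε₂)).2 hprod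
      calc Sp x * Sq x ≤ (p x * q x) / (ε₁ * ε₂) := h3
        _ = (ε₁ * ε₂)⁻¹ * (p x * q x) := by ring
    rw [Real.norm_eq_abs, abs_of_nonneg (by positivity)]
    calc Real.exp (γ * x) * Real.sqrt (Sp x * Sq x)
        ≤ Real.exp (γ * x) * ((Real.sqrt (ε₁ * ε₂))⁻¹ * Real.sqrt (p x * q x)) :=
          mul_le_mul_of_nonneg_left hsq (Real.exp_pos _).le
      _ = (Real.sqrt (ε₁ * ε₂))⁻¹ * (Real.exp (γ * x) * Real.sqrt (p x * q x)) := by ring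
end

section
/- Log-integral tail lemma, pointwise form (Lemma 8, first inequality): Let p and q be probability densities on (0,∞), everywhere positive on (0,∞), with survivor functions S_p(x) = ∫_x^∞ p(u) du and S_q(x) = ∫_x^∞ q(u) du, both positive for all x ≥ 0. Suppose that for the given x ≥ 0 the integral ∫_x^∞ p(u) ln(p(u)/q(u)) du is well-defined (its negative part is integrable). Then ∫_x^∞ p(u) ln(p(u)/q(u)) du ≥ S_p(x) · ln( S_p(x)/S_q(x) ). -/
/-!
Put `c = S_p(x) / S_q(x)`. From `log t ≥ 1 - 1/t` one gets, pointwise where `p, q > 0`,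
`p log (p/q) ≥ p log c + p - c q`, and the right-hand side integrates over `(x, ∞)` to
`S_p(x) log c + S_p(x) - c S_q(x) = S_p(x) log c`. If `∫_x^∞ p log (p/q)` is infinite there is
nothing to prove; otherwise `p log (p/q)` is integrable on `(x, ∞)` and the bound integrates.
-/

open MeasureTheory Set

lemma mul_log_add_sub_mul_le_mul_log_div {a b c : ℝ} (ha : 0 < a) (hb : 0 < b) (hc : 0 < c) :
    a * Real.log c + a - c * b ≤ a * Real.log (a / b) := by
  have h := mul_le_mul_of_nonneg_left
    (Real.one_sub_inv_le_log_of_pos (show 0 < a / (c * b) by positivity)) ha.le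
  have h_lhs : a * (1 - (a / (c * b))⁻¹) = a - c * b := by field_simp
  rw [h_lhs, div_mul_eq_div_div_swap, Real.log_div (by positivity) hc.ne'] at h
  linarith

section

variable {α : Type*} [MeasurableSpace α] {μ : Measure α}

/-- The log-sum inequality for integrals. -/
theorem mul_log_integral_div_le_integral_mul_log_div {p q : α → ℝ}
    (hp : Integrable p μ) (hq : Integrable q μ)
    (hpq : Integrable (fun u => p u * Real.log (p u / q u)) μ)
    (hp_pos : ∀ᵐ u ∂μ, 0 < p u) (hq_pos : ∀ᵐ u ∂μ, 0 < q u)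
    (hp_int : 0 < ∫ u, p u ∂μ) (hq_int : 0 < ∫ u, q u ∂μ) :
    (∫ u, p u ∂μ) * Real.log ((∫ u, p u ∂μ) / ∫ u, q u ∂μ) ≤
      ∫ u, p u * Real.log (p u / q u) ∂μ := by
  set c := (∫ u, p u ∂μ) / ∫ u, q u ∂μ
  have hc : 0 < c := div_pos hp_int hq_int
  have h₁ : Integrable (fun u => p u * Real.log c + p u) μ := (hp.mul_const _).add hp
  have h₂ : Integrable (fun u => c * q u) μ := hq.const_mul _
  calc (∫ u, p u ∂μ) * Real.log c
      = ∫ u, p u * Real.log c + p u - c * q u ∂μ := by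
        rw [integral_sub h₁ h₂, integral_add (hp.mul_const _) hp, integral_mul_const,
          integral_const_mul, div_mul_cancel₀ _ hq_int.ne']
        ring
    _ ≤ ∫ u, p u * Real.log (p u / q u) ∂μ := by
        refine integral_mono_ae (h₁.sub h₂) hpq ?_
        filter_upwards [hp_pos, hq_pos] with u hpu hqu
        exact mul_log_add_sub_mul_le_mul_log_div hpu hqu hc

lemma integrable_of_lintegral_ofReal_ne_top {f : α → ℝ} (hf : AEStronglyMeasurable f μ)
    (hneg : Integrable (fun u => max 0 (-f u)) μ)
    (htop : ∫⁻ u, ENNReal.ofReal (f u) ∂μ ≠ ⊤) : Integrable f μ := by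
  have hpos : Integrable (fun u => max 0 (f u)) μ := by
    refine (lintegral_ofReal_ne_top_iff_integrable (aestronglyMeasurable_const.sup hf)
      (.of_forall fun u => le_max_left 0 (f u))).1 ?_
    simpa using htop
  convert hpos.sub hneg using 1
  ext u
  rw [Pi.sub_apply, max_comm, max_comm 0, max_zero_sub_max_neg_zero_eq_self]

/-- `c ≤ ∫ f ∈ (-∞, ∞]` for `f` with integrable negative part, as `c + ∫ f⁻ ≤ ∫⁻ f⁺`. -/
theorem ofReal_add_integral_negPart_le_lintegral {f : α → ℝ} {c : ℝ}
    (hf : AEStronglyMeasurable f μ) (hneg : Integrable (fun u => max 0 (-f u)) μ)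
    (hc : Integrable f μ → c ≤ ∫ u, f u ∂μ) :
    ENNReal.ofReal (c + ∫ u, max 0 (-f u) ∂μ) ≤ ∫⁻ u, ENNReal.ofReal (f u) ∂μ := by
  by_cases htop : ∫⁻ u, ENNReal.ofReal (f u) ∂μ = ⊤
  · exact htop ▸ le_top
  have hfi := integrable_of_lintegral_ofReal_ne_top hf hneg htop
  have hneg_eq : ∫ u, max 0 (-f u) ∂μ = (∫⁻ u, ENNReal.ofReal (-f u) ∂μ).toReal := by
    rw [integral_eq_lintegral_of_nonneg_ae (.of_forall fun u => le_max_left 0 (-f u))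
      hneg.aestronglyMeasurable]
    simp
  rw [← ENNReal.ofReal_toReal htop]
  refine ENNReal.ofReal_le_ofReal ?_
  have hc' := hc hfi
  rw [integral_eq_lintegral_pos_part_sub_lintegral_neg_part hfi] at hc'
  linarith

end

theorem log_integral_tail_pointwise_general
    (p q : ℝ → ℝ)
    (hp_meas : Measurable p) (hq_meas : Measurable q)
    (hp_pos : ∀ y > (0 : ℝ), 0 < p y) (hq_pos : ∀ y > (0 : ℝ), 0 < q y)
    (hp_prob : ∫ y in Ioi (0 : ℝ), p y = 1) (hq_prob : ∫ y in Ioi (0 : ℝ), q y = 1)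
    (hSp_pos : ∀ y ≥ (0 : ℝ), 0 < ∫ u in Ioi y, p u)
    (hSq_pos : ∀ y ≥ (0 : ℝ), 0 < ∫ u in Ioi y, q u)
    (x : ℝ) (hx : 0 ≤ x)
    (hneg : IntegrableOn (fun u => max 0 (-(p u * Real.log (p u / q u)))) (Ioi x)) :
    ENNReal.ofReal
        ((∫ u in Ioi x, p u) * Real.log ((∫ u in Ioi x, p u) / ∫ u in Ioi x, q u) +
          ∫ u in Ioi x, max 0 (-(p u * Real.log (p u / q u)))) ≤
      ∫⁻ u in Ioi x, ENNReal.ofReal (p u * Real.log (p u / q u)) := by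
  have hp_int : IntegrableOn p (Ioi x) := IntegrableOn.mono_set
    (Integrable.of_integral_ne_zero (hp_prob ▸ one_ne_zero)) (Ioi_subset_Ioi hx)
  have hq_int : IntegrableOn q (Ioi x) := IntegrableOn.mono_set
    (Integrable.of_integral_ne_zero (hq_prob ▸ one_ne_zero)) (Ioi_subset_Ioi hx)
  have ae_pos_of_pos {r : ℝ → ℝ} (hr : ∀ y > (0 : ℝ), 0 < r y) :
      ∀ᵐ u ∂volume.restrict (Ioi x), 0 < r u :=
    (ae_restrict_mem measurableSet_Ioi).mono fun u hu => hr u (hx.trans_lt hu)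
  exact ofReal_add_integral_negPart_le_lintegral
    (hp_meas.mul (hp_meas.div hq_meas).log).aestronglyMeasurable hneg fun hf =>
      mul_log_integral_div_le_integral_mul_log_div hp_int hq_int hf (ae_pos_of_pos hp_pos)
        (ae_pos_of_pos hq_pos) (hSp_pos x hx) (hSq_pos x hx)

/-- **Log-integral tail lemma, pointwise form.**
Let `p, q` be probability densities on `(0,∞)`, positive on `(0,∞)`, with positive
survivor functions `S_p y = ∫_y^∞ p`, `S_q y = ∫_y^∞ q`.  Fix `x ≥ 0` and suppose the
negative part of `u ↦ p u * ln (p u / q u)` is integrable on `(x,∞)` (so that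
`∫_x^∞ p ln (p/q)` is well-defined with value in `(-∞, ∞]`).  Then
`∫_x^∞ p ln (p/q) ≥ S_p x * ln (S_p x / S_q x)`.  This is expressed as:
the positive-part lower Lebesgue integral dominates
`S_p x * ln (S_p x / S_q x)` plus the (finite) integral of the negative part. -/
theorem log_integral_tail_pointwise
    (p q : ℝ → ℝ)
    (hp_meas : Measurable p) (hq_meas : Measurable q)
    (hp_pos : ∀ y > (0 : ℝ), 0 < p y) (hq_pos : ∀ y > (0 : ℝ), 0 < q y)
    (hp_zero : ∀ y ≤ (0 : ℝ), p y = 0) (hq_zero : ∀ y ≤ (0 : ℝ), q y = 0)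
    (hp_prob : ∫ y in Ioi (0 : ℝ), p y = 1) (hq_prob : ∫ y in Ioi (0 : ℝ), q y = 1)
    (hSp_pos : ∀ y ≥ (0 : ℝ), 0 < ∫ u in Ioi y, p u)
    (hSq_pos : ∀ y ≥ (0 : ℝ), 0 < ∫ u in Ioi y, q u)
    (x : ℝ) (hx : 0 ≤ x)
    (hneg : IntegrableOn (fun u => max 0 (-(p u * Real.log (p u / q u)))) (Ioi x)) :
    ENNReal.ofReal
        ((∫ u in Ioi x, p u) * Real.log ((∫ u in Ioi x, p u) / ∫ u in Ioi x, q u) +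
          ∫ u in Ioi x, max 0 (-(p u * Real.log (p u / q u)))) ≤
      ∫⁻ u in Ioi x, ENNReal.ofReal (p u * Real.log (p u / q u)) :=
  log_integral_tail_pointwise_general p q hp_meas hq_meas hp_pos hq_pos hp_prob hq_prob hSp_pos
    hSq_pos x hx hneg
end
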